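/- arXiv:1610.05804 — 7 statements merged into one kernel-verified Lean document; each statement's English description precedes it below -/
import Mathlib

section
/- For every integer q ≥ 2, the product over primes p dividing q of (1 - 1/√p)^{-1} is at most 3.32·√q. -/
private lemma sqrt_prod_aux (s : Finset ℕ) :
    ∏ p ∈ s, Real.sqrt p = Real.sqrt (∏ p ∈ s, (p : ℝ)) := by
  induction s using Finset.cons_induction with
  | empty => simp
  | cons a s ha ih =>
      rw [Finset.prod_cons, Finset.prod_cons, ih, ← Real.sqrt_mul (by positivity)]

theorem stmt_0 (q : ℕ) (hq : 2 ≤ q) :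
    ∏ p ∈ q.primeFactors, (1 - 1 / Real.sqrt p)⁻¹ ≤ 3.32 * Real.sqrt q := by
  set S := q.primeFactors with hS
  have hprime : ∀ p ∈ S, Nat.Prime p := fun p hp => Nat.prime_of_mem_primeFactors hp
  -- basic sqrt bounds
  have h2 : (1.414 : ℝ) ≤ Real.sqrt 2 := by
    rw [show (1.414:ℝ) = Real.sqrt (1.414^2) from (Real.sqrt_sq (by norm_num)).symm]
    exact Real.sqrt_le_sqrt (by norm_num)
  have h3 : (1.732 : ℝ) ≤ Real.sqrt 3 := by
    rw [show (1.732:ℝ) = Real.sqrt (1.732^2) from (Real.sqrt_sq (by norm_num)).symm]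
    exact Real.sqrt_le_sqrt (by norm_num)
  have h4eq : Real.sqrt 4 = 2 := by
    rw [show (4:ℝ) = 2^2 by norm_num, Real.sqrt_sq (by norm_num)]
  have h2u : Real.sqrt 2 ≤ 2 :=
    le_trans (Real.sqrt_le_sqrt (by norm_num : (2:ℝ) ≤ 4)) (le_of_eq h4eq)
  have h3u : Real.sqrt 3 ≤ 2 :=
    le_trans (Real.sqrt_le_sqrt (by norm_num : (3:ℝ) ≤ 4)) (le_of_eq h4eq)
  have hp1 : ∀ p ∈ S, (1 : ℝ) < Real.sqrt p := by
    intro p hp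
    have h2p : (2:ℝ) ≤ (p:ℝ) := by exact_mod_cast (hprime p hp).two_le
    calc (1:ℝ) < 1.414 := by norm_num
      _ ≤ Real.sqrt 2 := h2
      _ ≤ Real.sqrt p := Real.sqrt_le_sqrt h2p
  -- rewrite each factor
  have hfac : ∀ p ∈ S, (1 - 1 / Real.sqrt p)⁻¹ = (Real.sqrt p - 1)⁻¹ * Real.sqrt p := by
    intro p hp
    have h1 := hp1 p hp
    have hne : Real.sqrt p ≠ 0 := by linarith
    have hne2 : Real.sqrt p - 1 ≠ 0 := by linarith
    rw [show 1 - 1 / Real.sqrt p = (Real.sqrt p - 1) / Real.sqrt p by field_simp]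
    rw [inv_div, div_eq_mul_inv, mul_comm]
  rw [Finset.prod_congr rfl hfac, Finset.prod_mul_distrib]
  -- bound product of sqrt p
  have hB : ∏ p ∈ S, Real.sqrt p ≤ Real.sqrt q := by
    rw [sqrt_prod_aux]
    apply Real.sqrt_le_sqrt
    have hdvd : (∏ p ∈ S, p) ∣ q := Nat.prod_primeFactors_dvd q
    have hle : (∏ p ∈ S, p) ≤ q := Nat.le_of_dvd (by omega) hdvd
    calc ∏ p ∈ S, (p:ℝ) = ((∏ p ∈ S, p : ℕ) : ℝ) := by push_cast; ring
      _ ≤ (q:ℝ) := by exact_mod_cast hle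
  -- bound product of (sqrt p - 1)⁻¹
  have hgnn : ∀ p ∈ S, (0:ℝ) ≤ (Real.sqrt p - 1)⁻¹ := by
    intro p hp
    have := hp1 p hp
    exact inv_nonneg.mpr (by linarith)
  have hge1 : ∀ p ∈ ({2,3} : Finset ℕ), (1:ℝ) ≤ (Real.sqrt p - 1)⁻¹ := by
    intro p hp
    fin_cases hp
    · push_cast
      have hpos : (0:ℝ) < Real.sqrt 2 - 1 := by linarith
      have := inv_anti₀ hpos (show Real.sqrt 2 - 1 ≤ 1 by linarith)
      simpa using this
    · push_cast
      have hpos : (0:ℝ) < Real.sqrt 3 - 1 := by linarith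
      have := inv_anti₀ hpos (show Real.sqrt 3 - 1 ≤ 1 by linarith)
      simpa using this
  have hA : ∏ p ∈ S, (Real.sqrt p - 1)⁻¹ ≤ 3.32 := by
    have hsplit := Finset.prod_filter_mul_prod_filter_not S
      (fun p => p ∈ ({2,3} : Finset ℕ)) (fun p => (Real.sqrt p - 1)⁻¹)
    have hout : ∏ p ∈ S.filter (fun p => ¬ p ∈ ({2,3} : Finset ℕ)),
        (Real.sqrt p - 1)⁻¹ ≤ 1 := by
      apply Finset.prod_le_one
      · intro p hp
        exact hgnn p (Finset.mem_filter.mp hp).1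
      · intro p hp
        obtain ⟨hpS, hpnot⟩ := Finset.mem_filter.mp hp
        simp only [Finset.mem_insert, Finset.mem_singleton, not_or] at hpnot
        have hprim := hprime p hpS
        have h5 : 5 ≤ p := by
          have h4 : p ≠ 4 := by rintro rfl; norm_num at hprim
          have := hprim.two_le
          omega
        have hs5 : (2:ℝ) ≤ Real.sqrt p := by
          calc (2:ℝ) = Real.sqrt 4 := by
                rw [show (4:ℝ) = 2^2 by norm_num, Real.sqrt_sq (by norm_num)]
            _ ≤ Real.sqrt p := Real.sqrt_le_sqrt (by exact_mod_cast by omega)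
        rw [inv_le_one_iff₀]
        right; linarith
    have hTsub : S.filter (fun p => p ∈ ({2,3} : Finset ℕ)) ⊆ ({2,3} : Finset ℕ) :=
      fun p hp => (Finset.mem_filter.mp hp).2
    have hin : ∏ p ∈ S.filter (fun p => p ∈ ({2,3} : Finset ℕ)),
        (Real.sqrt p - 1)⁻¹ ≤ ∏ p ∈ ({2,3} : Finset ℕ), (Real.sqrt p - 1)⁻¹ := by
      rw [← Finset.prod_sdiff hTsub]
      apply le_mul_of_one_le_left
      · exact Finset.prod_nonneg fun p hp => hgnn p (Finset.mem_filter.mp hp).1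
      · calc (1:ℝ) = ∏ _p ∈ (({2,3} : Finset ℕ) \ S.filter (fun p => p ∈ ({2,3} : Finset ℕ))), 1 := by
              simp
          _ ≤ _ := Finset.prod_le_prod (fun _ _ => by norm_num)
              (fun p hp => hge1 p (Finset.mem_sdiff.mp hp).1)
    have h23 : ∏ p ∈ ({2,3} : Finset ℕ), (Real.sqrt p - 1)⁻¹ ≤ 3.32 := by
      rw [Finset.prod_insert (by norm_num), Finset.prod_singleton]
      have e2 : ((Real.sqrt (2:ℕ)) - 1)⁻¹ ≤ (0.414:ℝ)⁻¹ := by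
        apply inv_anti₀ (by norm_num) (by push_cast; linarith)
      have e3 : ((Real.sqrt (3:ℕ)) - 1)⁻¹ ≤ (0.732:ℝ)⁻¹ := by
        apply inv_anti₀ (by norm_num) (by push_cast; linarith)
      have nn2 : (0:ℝ) ≤ ((Real.sqrt (2:ℕ)) - 1)⁻¹ := by
        push_cast
        exact inv_nonneg.mpr (by linarith)
      have nn3 : (0:ℝ) ≤ ((Real.sqrt (3:ℕ)) - 1)⁻¹ := by
        push_cast
        exact inv_nonneg.mpr (by linarith)
      calc ((Real.sqrt (2:ℕ)) - 1)⁻¹ * ((Real.sqrt (3:ℕ)) - 1)⁻¹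
          ≤ (0.414:ℝ)⁻¹ * (0.732:ℝ)⁻¹ := mul_le_mul e2 e3 nn3 (by norm_num)
        _ ≤ 3.32 := by norm_num
    calc ∏ p ∈ S, (Real.sqrt p - 1)⁻¹
        = (∏ p ∈ S.filter (fun p => p ∈ ({2,3} : Finset ℕ)), (Real.sqrt p - 1)⁻¹) *
          ∏ p ∈ S.filter (fun p => ¬ p ∈ ({2,3} : Finset ℕ)), (Real.sqrt p - 1)⁻¹ :=
          hsplit.symm
      _ ≤ (∏ p ∈ ({2,3} : Finset ℕ), (Real.sqrt p - 1)⁻¹) * 1 := by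
          apply mul_le_mul hin hout
          · exact Finset.prod_nonneg fun p hp => hgnn p (Finset.mem_filter.mp hp).1
          · exact Finset.prod_nonneg fun p hp => le_trans zero_le_one (hge1 p hp)
      _ ≤ 3.32 := by rw [mul_one]; exact h23
  have hBnn : (0:ℝ) ≤ ∏ p ∈ S, Real.sqrt p :=
    Finset.prod_nonneg fun p _ => Real.sqrt_nonneg _
  exact mul_le_mul hA hB hBnn (by norm_num)
end

section
/- Let χ be a non-principal Dirichlet character modulo q and let I be a subset of {1, ..., q}. Then |∑_{n ∈ I} χ(n)| ≤ φ(q)/2. -/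
/-!
Only units contribute, and since `χ ≠ 1` the sum of `χ` over all units vanishes. Hence the sum
over the units in `I` is minus the sum over the remaining units; the two sums are bounded by the
sizes of the two sets of units, which add up to `φ q`, so the smaller bound is at most `φ q / 2`.
The reduction to `ZMod q` is harmless because `1, …, q` are distinct residues.
-/

open Finset
open scoped Nat

theorem norm_sum_le_card_div_two_of_sum_eq_zero {ι E : Type*} [SeminormedAddCommGroup E]
    {f : ι → E} {s t : Finset ι} (hts : t ⊆ s) (hf : ∀ i ∈ s, ‖f i‖ ≤ 1)
    (hs : ∑ i ∈ s, f i = 0) : ‖∑ i ∈ t, f i‖ ≤ #s / 2 := by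
  classical
  have norm_sum_le_card : ∀ u ⊆ s, ‖∑ i ∈ u, f i‖ ≤ #u := fun u hu => by
    simpa using norm_sum_le_of_le u fun i hi => hf i (hu hi)
  have hcompl : ∑ i ∈ t, f i = -∑ i ∈ s \ t, f i := by
    rw [eq_neg_iff_add_eq_zero, add_comm, sum_sdiff hts, hs]
  have hcard : (#(s \ t) : ℝ) + #t = #s := by exact_mod_cast card_sdiff_add_card_eq_card hts
  have h₁ := norm_sum_le_card t hts
  have h₂ := norm_sum_le_card (s \ t) sdiff_subset
  rw [← norm_neg, ← hcompl] at h₂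
  linarith

theorem ZMod.natCast_injOn_Icc (q : ℕ) :
    Set.InjOn (Nat.cast : ℕ → ZMod q) (Set.Icc 1 q) := by
  intro m hm n hn hmn
  refine ((ZMod.natCast_eq_natCast_iff m n q).mp hmn).eq_of_abs_lt ?_
  obtain ⟨hm₁, hm₂⟩ := hm
  obtain ⟨hn₁, hn₂⟩ := hn
  rw [abs_sub_lt_iff]
  omega

theorem ZMod.card_filter_isUnit (q : ℕ) [NeZero q] :
    #{a : ZMod q | IsUnit a} = φ q := by
  rw [← ZMod.card_units_eq_totient, ← card_univ, ← card_map ⟨_, Units.val_injective⟩]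
  congr
  ext a
  simp only [mem_filter, mem_univ, true_and, mem_map, Function.Embedding.coeFn_mk]
  rfl

namespace DirichletCharacter

theorem norm_sum_le_totient_div_two {F : Type*} [NormedField F] {q : ℕ} [NeZero q]
    {χ : DirichletCharacter F q} (hχ : χ ≠ 1) (s : Finset (ZMod q)) :
    ‖∑ a ∈ s, χ a‖ ≤ φ q / 2 := by
  have hunits : ∀ t : Finset (ZMod q), ∑ a ∈ t with IsUnit a, χ a = ∑ a ∈ t, χ a := fun t =>
    sum_filter_of_ne fun a _ ha => by_contra fun h => ha (χ.map_nonunit h)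
  rw [← hunits, ← ZMod.card_filter_isUnit]
  refine norm_sum_le_card_div_two_of_sum_eq_zero (filter_subset_filter _ (subset_univ s))
    (fun a _ => χ.norm_le_one a) ?_
  rw [hunits, MulChar.sum_eq_zero_of_ne_one hχ]

end DirichletCharacter

theorem stmt_4 (q : ℕ) (hq : 2 ≤ q) (χ : DirichletCharacter ℂ q) (hχ : χ ≠ 1)
    (I : Finset ℕ) (hI : I ⊆ Finset.Icc 1 q) :
    ‖∑ n ∈ I, χ n‖ ≤ (Nat.totient q : ℝ) / 2 := by
  have : NeZero q := ⟨by omega⟩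
  have hinj : Set.InjOn (Nat.cast : ℕ → ZMod q) I := (ZMod.natCast_injOn_Icc q).mono <| by
    simpa [← coe_Icc] using hI
  rw [← sum_image (f := fun a : ZMod q => χ a) hinj]
  exact χ.norm_sum_le_totient_div_two hχ _
end

section
/- Let χ be a non-principal Dirichlet character modulo q. For any finite interval of integers I (i.e., I = {M+1, ..., N} for integers M ≤ N), we have |∑_{n ∈ I} χ(n)| ≤ φ(q)/2. -/
/-!
The values `χ n` only depend on `n mod q` and sum to zero over any `q` consecutive integers.
Removing whole periods from `(M, N]` leaves an interval `J` of length `< q` with the same sum `S`,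
and the complement of `J` in the period containing it has sum `-S`. Bounding `‖S‖` by the number
of units in `J` and by the number in its complement gives `2 ‖S‖ ≤ φ(q)`.
-/

open Finset

theorem Finset.sum_Ioc_add_sum_Ioc {α M : Type*} [LinearOrder α] [LocallyFiniteOrder α]
    [AddCommMonoid M] (f : α → M) {a b c : α} (hab : a ≤ b) (hbc : b ≤ c) :
    ∑ x ∈ Ioc a b, f x + ∑ x ∈ Ioc b c, f x = ∑ x ∈ Ioc a c, f x := by
  rw [← sum_union (Ioc_disjoint_Ioc_of_le le_rfl), Ioc_union_Ioc_eq_Ioc hab hbc]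

namespace ZMod

theorem injOn_intCast_Ioc {q : ℕ} (a : ℤ) :
    Set.InjOn (Int.cast : ℤ → ZMod q) (Ioc a (a + q)) := by
  intro m hm n hn hmn
  rw [coe_Ioc, Set.mem_Ioc] at hm hn
  rw [intCast_eq_intCast_iff_dvd_sub] at hmn
  have := Int.eq_zero_of_dvd_of_natAbs_lt_natAbs hmn (by omega)
  omega

variable {q : ℕ} [NeZero q]

theorem sum_Ioc_intCast {M : Type*} [AddCommMonoid M] (f : ZMod q → M) (a : ℤ) :
    ∑ n ∈ Ioc a (a + q), f n = ∑ x, f x := by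
  rw [← sum_image (injOn_intCast_Ioc a)]
  congr
  refine eq_univ_of_card _ ?_
  rw [card_image_of_injOn (injOn_intCast_Ioc a), Int.card_Ioc, card]
  omega

theorem sum_Ioc_intCast_mul {M : Type*} [AddCommMonoid M] (f : ZMod q → M) (a : ℤ) (k : ℕ) :
    ∑ n ∈ Ioc a (a + k * q), f n = k • ∑ x, f x := by
  induction k with
  | zero => simp
  | succ k ih =>
    have hstep : a + ↑(k + 1) * (q : ℤ) = a + k * q + q := by push_cast; ring
    have hk : a ≤ a + k * q := le_add_of_nonneg_right (by positivity)
    rw [hstep, ← sum_Ioc_add_sum_Ioc _ hk (by omega), ih, sum_Ioc_intCast, succ_nsmul]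

theorem norm_sum_Ioc_intCast_le_half {E : Type*} [SeminormedAddCommGroup E] (f : ZMod q → E)
    (hf : ∑ x, f x = 0) (a b : ℤ) :
    ‖∑ n ∈ Ioc a b, f n‖ ≤ (∑ x, ‖f x‖) / 2 := by
  rcases le_total b a with hba | hab
  · rw [Ioc_eq_empty_of_le hba, sum_empty, norm_zero]
    positivity
  set k := (b - a).toNat / q
  set c := a + k * q
  have hkq : k * q ≤ (b - a).toNat := Nat.div_mul_le_self _ _
  have hkq' : (b - a).toNat < k * q + q := Nat.lt_div_mul_add (NeZero.pos q)
  have hac : a ≤ c := le_add_of_nonneg_right (by positivity)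
  have hcb : c ≤ b := by omega
  have hbc : b ≤ c + q := by omega
  have hreduce : ∑ n ∈ Ioc a b, f n = ∑ n ∈ Ioc c b, f n := by
    rw [← sum_Ioc_add_sum_Ioc _ hac hcb, sum_Ioc_intCast_mul, hf, smul_zero, zero_add]
  have hcomplement : ∑ n ∈ Ioc c b, f n + ∑ n ∈ Ioc b (c + q), f n = 0 := by
    rw [sum_Ioc_add_sum_Ioc _ hcb hbc, sum_Ioc_intCast, hf]
  have hnorms : ∑ n ∈ Ioc c b, ‖f n‖ + ∑ n ∈ Ioc b (c + q), ‖f n‖ = ∑ x, ‖f x‖ := by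
    rw [sum_Ioc_add_sum_Ioc (fun n : ℤ ↦ ‖f n‖) hcb hbc, sum_Ioc_intCast (fun x ↦ ‖f x‖)]
  have hleft : ‖∑ n ∈ Ioc c b, f n‖ ≤ ∑ n ∈ Ioc c b, ‖f n‖ := norm_sum_le _ _
  have hright : ‖∑ n ∈ Ioc c b, f n‖ ≤ ∑ n ∈ Ioc b (c + q), ‖f n‖ := by
    rw [eq_neg_of_add_eq_zero_left hcomplement, norm_neg]
    exact norm_sum_le _ _
  rw [hreduce]
  linarith

end ZMod

theorem DirichletCharacter.sum_norm_eq_totient {q : ℕ} [NeZero q] (χ : DirichletCharacter ℂ q) :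
    ∑ x, ‖χ x‖ = q.totient := by
  have hsum : ∑ _u : (ZMod q)ˣ, (1 : ℝ) = ∑ x, ‖χ x‖ :=
    Fintype.sum_of_injective _ Units.val_injective _ _
      (fun x hx ↦ by rw [χ.map_nonunit fun hu ↦ hx hu, norm_zero])
      (fun u ↦ (χ.unit_norm_eq_one u).symm)
  rw [← hsum, sum_const, card_univ, ZMod.card_units_eq_totient, nsmul_one]

theorem stmt_5_general (q : ℕ) (hq : 2 ≤ q) (χ : DirichletCharacter ℂ q) (hχ : χ ≠ 1)
    (M N : ℤ) :
    ‖∑ n ∈ Finset.Icc (M + 1) N, χ n‖ ≤ (Nat.totient q : ℝ) / 2 := by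
  have : NeZero q := ⟨by omega⟩
  rw [Icc_add_one_left_eq_Ioc]
  calc ‖∑ n ∈ Ioc M N, χ n‖ ≤ (∑ x, ‖χ x‖) / 2 :=
        ZMod.norm_sum_Ioc_intCast_le_half χ (MulChar.sum_eq_zero_of_ne_one hχ) M N
    _ = q.totient / 2 := by rw [χ.sum_norm_eq_totient]

theorem stmt_5 (q : ℕ) (hq : 2 ≤ q) (χ : DirichletCharacter ℂ q) (hχ : χ ≠ 1)
    (M N : ℤ) (hMN : M ≤ N) :
    ‖∑ n ∈ Finset.Icc (M + 1) N, χ n‖ ≤ (Nat.totient q : ℝ) / 2 :=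
  stmt_5_general q hq χ hχ M N
end

section
/- The function g(x) = 1/x − 1/(e^x − 1) on (0,∞) is nonnegative, non-increasing, and tends to 1/2 as x → 0⁺. -/
/-!
Writing `g x = (eˣ - 1 - x) / (x (eˣ - 1))`, nonnegativity is `x + 1 ≤ eˣ`. The sign of
`g' x = eˣ / (eˣ - 1)² - 1 / x²` is that of `x² eˣ - (eˣ - 1)²`, and since
`(eˣ - 1)² = eˣ (2 sinh (x / 2))²` this is `|x / 2| ≤ |sinh (x / 2)|`. For the limit, one step of
L'Hôpital leaves `(eˣ - 1) / (eˣ - 1 + x eˣ) = s / (s + eˣ)`, where `s = (eˣ - 1) / x` tends to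
`exp' 0 = 1`.
-/

open Real Set Filter Topology

theorem sq_le_sinh_sq (x : ℝ) : x ^ 2 ≤ sinh x ^ 2 := by
  rw [sq_le_sq, abs_sinh]
  exact self_le_sinh_iff.2 (abs_nonneg x)

theorem exp_sub_one_sq_eq (x : ℝ) : (exp x - 1) ^ 2 = (2 * sinh (x / 2)) ^ 2 * exp x := by
  have hsq : exp x = exp (x / 2) ^ 2 := by rw [← exp_nat_mul]; ring_nf
  have hinv : exp (x / 2) * exp (-(x / 2)) = 1 := by rw [← exp_add]; simp
  rw [sinh_eq, hsq]
  linear_combination (2 * exp (x / 2) ^ 2 - 1 - exp (x / 2) * exp (-(x / 2))) * hinv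

theorem sq_mul_exp_le_exp_sub_one_sq (x : ℝ) : x ^ 2 * exp x ≤ (exp x - 1) ^ 2 := by
  rw [exp_sub_one_sq_eq]
  refine mul_le_mul_of_nonneg_right ?_ (exp_pos x).le
  nlinarith [sq_le_sinh_sq (x / 2)]

theorem exp_sub_one_pos {x : ℝ} (hx : 0 < x) : 0 < exp x - 1 :=
  sub_pos.2 (one_lt_exp_iff.2 hx)

theorem exp_sub_one_ne_zero {x : ℝ} (hx : x ≠ 0) : exp x - 1 ≠ 0 :=
  sub_ne_zero.2 fun h => hx ((exp_eq_one_iff x).1 h)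

theorem inv_sub_inv_exp_sub_one_nonneg {x : ℝ} (hx : 0 < x) : 0 ≤ 1 / x - 1 / (exp x - 1) := by
  rw [sub_nonneg]
  exact one_div_le_one_div_of_le hx (by linarith [add_one_le_exp x])

theorem hasDerivAt_inv_sub_inv_exp_sub_one {x : ℝ} (hx : x ≠ 0) :
    HasDerivAt (fun y => 1 / y - 1 / (exp y - 1)) (exp x / (exp x - 1) ^ 2 - 1 / x ^ 2) x := by
  have h := (hasDerivAt_inv hx).sub
    (((hasDerivAt_exp x).sub_const 1).inv (exp_sub_one_ne_zero hx))
  simp only [one_div]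
  exact h.congr_deriv (by ring)

theorem antitoneOn_inv_sub_inv_exp_sub_one :
    AntitoneOn (fun x => 1 / x - 1 / (exp x - 1)) (Ioi 0) := by
  refine antitoneOn_of_hasDerivWithinAt_nonpos
    (f' := fun x => exp x / (exp x - 1) ^ 2 - 1 / x ^ 2) (convex_Ioi 0) ?_ ?_ ?_
  · exact fun x hx =>
      (hasDerivAt_inv_sub_inv_exp_sub_one hx.ne').continuousAt.continuousWithinAt
  · rw [interior_Ioi]
    exact fun x hx => (hasDerivAt_inv_sub_inv_exp_sub_one hx.ne').hasDerivWithinAt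
  · rw [interior_Ioi]
    intro x (hx : 0 < x)
    have he := exp_sub_one_pos hx
    rw [sub_nonpos, div_le_div_iff₀ (by positivity) (by positivity), one_mul, mul_comm]
    exact sq_mul_exp_le_exp_sub_one_sq x

theorem tendsto_exp_sub_one_div_nhdsGT :
    Tendsto (fun x => (exp x - 1) / x) (𝓝[>] 0) (𝓝 1) := by
  simpa [div_eq_inv_mul] using (hasDerivAt_exp 0).tendsto_slope_zero_right

theorem tendsto_inv_sub_inv_exp_sub_one_nhdsGT :
    Tendsto (fun x => 1 / x - 1 / (exp x - 1)) (𝓝[>] 0) (𝓝 (1 / 2)) := by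
  have hcombine : ∀ᶠ x in 𝓝[>] (0 : ℝ),
      (exp x - 1 - x) / (x * (exp x - 1)) = 1 / x - 1 / (exp x - 1) := by
    filter_upwards [self_mem_nhdsWithin] with x (hx : 0 < x)
    have := exp_sub_one_pos hx
    field_simp
  have hquot : ∀ᶠ x in 𝓝[>] (0 : ℝ), (exp x - 1) / x / ((exp x - 1) / x + exp x)
      = (exp x - 1) / (exp x - 1 + x * exp x) := by
    filter_upwards [self_mem_nhdsWithin] with x (hx : 0 < x)
    have := exp_sub_one_pos hx
    field_simp
  have hratio :
      Tendsto (fun x => (exp x - 1) / (exp x - 1 + x * exp x)) (𝓝[>] 0) (𝓝 (1 / 2)) := by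
    have h := tendsto_exp_sub_one_div_nhdsGT.div (tendsto_exp_sub_one_div_nhdsGT.add
      ((continuous_exp.tendsto 0).mono_left nhdsWithin_le_nhds)) (by norm_num)
    norm_num at h
    exact h.congr' hquot
  refine Tendsto.congr' hcombine (HasDerivAt.lhopital_zero_nhdsGT
    (f' := fun x => exp x - 1) (g' := fun x => exp x - 1 + x * exp x) ?_ ?_ ?_ ?_ ?_ hratio)
  · exact .of_forall fun x => ((hasDerivAt_exp x).sub_const 1).sub (hasDerivAt_id x)
  · exact .of_forall fun x =>
      ((hasDerivAt_id x).mul ((hasDerivAt_exp x).sub_const 1)).congr_deriv (by simp)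
  · filter_upwards [self_mem_nhdsWithin] with x (hx : 0 < x)
    have := exp_sub_one_pos hx
    positivity
  · exact tendsto_nhdsWithin_of_tendsto_nhds
      ((by fun_prop : Continuous fun x => exp x - 1 - x).tendsto' 0 0 (by simp))
  · exact tendsto_nhdsWithin_of_tendsto_nhds
      ((by fun_prop : Continuous fun x => x * (exp x - 1)).tendsto' 0 0 (by simp))

theorem stmt_9 :
    (∀ x : ℝ, 0 < x → 0 ≤ 1 / x - 1 / (Real.exp x - 1)) ∧
      (AntitoneOn (fun x : ℝ => 1 / x - 1 / (Real.exp x - 1)) (Set.Ioi 0)) ∧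
      Filter.Tendsto (fun x : ℝ => 1 / x - 1 / (Real.exp x - 1))
        (nhdsWithin 0 (Set.Ioi 0)) (nhds (1 / 2)) :=
  ⟨fun _ hx => inv_sub_inv_exp_sub_one_nonneg hx, antitoneOn_inv_sub_inv_exp_sub_one,
    tendsto_inv_sub_inv_exp_sub_one_nhdsGT⟩
end

section
/- Let χ be a non-principal quadratic Dirichlet character modulo q, and let x ≥ 1. If no prime p ≤ x satisfies χ(p) = 1, then ∑_{n ≤ x} (1 ⋆ χ)(n) ≤ √x · ∏_{p | q} (1 − 1/√p)^{-1}. -/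
/-!
The function `F = 1 ⋆ χ` is multiplicative with `F(p^k) = 1 + χ(p) + ⋯ + χ(p)^k`. For `n ≤ x`
every prime factor `p` of `n` has `χ(p) ∈ {-1, 0}`, so each `F(p^k)` is `0` or `1`, and it is `0`
when `χ(p) = -1` and `k` is odd. Hence `F(n) ≤ 1`, and `F(n) = 0` unless `n = a b²` with every
prime factor of `a` dividing `q`. For fixed `a` there are at most `√(x/a)` such `n ≤ x`, and
`∑ a^{-1/2}` over these `a` is at most the Euler product `∏_{p ∣ q} (1 - p^{-1/2})⁻¹`.
-/

open ArithmeticFunction Finset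

namespace DirichletCharacter

variable {R : Type*} [CommRing R] {q : ℕ} (χ : DirichletCharacter R q)

noncomputable def divisorSum : ArithmeticFunction R :=
  (zeta : ArithmeticFunction R) * toArithmeticFunction (χ ·)

theorem divisorSum_apply (n : ℕ) : χ.divisorSum n = ∑ d ∈ n.divisors, χ d := by
  rw [divisorSum, coe_zeta_mul_apply]
  exact sum_congr rfl fun d hd ↦
    (χ.apply_eq_toArithmeticFunction_apply (Nat.pos_of_mem_divisors hd).ne').symm

theorem isMultiplicative_divisorSum : χ.divisorSum.IsMultiplicative :=
  isMultiplicative_zeta.natCast.mul χ.isMultiplicative_toArithmeticFunction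

theorem divisorSum_prime_pow {p : ℕ} (hp : p.Prime) (k : ℕ) :
    χ.divisorSum (p ^ k) = ∑ i ∈ range (k + 1), χ p ^ i := by
  simp only [divisorSum_apply, Nat.sum_divisors_prime_pow hp, Nat.cast_pow, map_pow]

theorem divisorSum_prime_pow_of_eq_neg_one {p : ℕ} (hp : p.Prime) (hχp : χ p = -1) (k : ℕ) :
    χ.divisorSum (p ^ k) = if _root_.Even k then 1 else 0 := by
  by_cases hk : _root_.Even k <;>
    simp [divisorSum_prime_pow χ hp, hχp, neg_one_geom_sum, Nat.even_add_one, hk]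

theorem divisorSum_prime_pow_of_eq_zero {p : ℕ} (hp : p.Prime) (hχp : χ p = 0) (k : ℕ) :
    χ.divisorSum (p ^ k) = 1 := by
  simp [divisorSum_prime_pow χ hp, hχp, sum_range_succ']

theorem divisorSum_eq_zero_of_odd_factorization {n p : ℕ} (hp : p.Prime) (hχp : χ p = -1)
    (hodd : _root_.Odd (n.factorization p)) : χ.divisorSum n = 0 := by
  rcases eq_or_ne n 0 with rfl | hn
  · simp
  rw [IsMultiplicative.multiplicative_factorization _ χ.isMultiplicative_divisorSum hn]
  refine prod_eq_zero (Finsupp.mem_support_iff.mpr hodd.pos.ne') ?_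
  dsimp only
  rw [divisorSum_prime_pow_of_eq_neg_one χ hp hχp, if_neg (Nat.not_even_iff_odd.mpr hodd)]

theorem mem_primeFactors_of_apply_eq_zero [Nontrivial R] [NeZero q] {p : ℕ} (hp : p.Prime)
    (h : χ p = 0) : p ∈ q.primeFactors := by
  refine Nat.mem_primeFactors.mpr ⟨hp, ?_, NeZero.ne q⟩
  by_contra hpq
  exact ((ZMod.isUnit_prime_iff_not_dvd hp).mpr hpq).map χ |>.ne_zero h

/-- For `n = b² a` with `a` squarefree, a prime `p ∣ a` with `χ p = -1` occurs in `n` to an odd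
power, which kills `(1 ⋆ χ)(n)`. -/
theorem exists_eq_mul_sq_of_divisorSum_ne_zero [Nontrivial R] [NeZero q] {n : ℕ}
    (h : ∀ p ∈ n.primeFactors, χ p = -1 ∨ χ p = 0) (hn : χ.divisorSum n ≠ 0) :
    ∃ a b, n = a * b ^ 2 ∧ a ∈ Nat.factoredNumbers q.primeFactors := by
  obtain ⟨a, b, rfl, ha⟩ := Nat.sq_mul_squarefree n
  refine ⟨a, b, mul_comm _ _, Nat.mem_factoredNumbers'.mpr fun p hp hpa ↦ ?_⟩
  have hn0 : b ^ 2 * a ≠ 0 := fun h ↦ hn (by simp [h])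
  have hpn : p ∈ (b ^ 2 * a).primeFactors :=
    Nat.mem_primeFactors.mpr ⟨hp, dvd_mul_of_dvd_right hpa _, hn0⟩
  refine χ.mem_primeFactors_of_apply_eq_zero hp ((h p hpn).resolve_left fun hχp ↦ hn ?_)
  refine χ.divisorSum_eq_zero_of_odd_factorization hp hχp ⟨b.factorization p, ?_⟩
  rw [Nat.factorization_mul (left_ne_zero_of_mul hn0) (right_ne_zero_of_mul hn0),
    Nat.factorization_pow, Finsupp.add_apply, Finsupp.smul_apply,
    Nat.factorization_eq_one_of_squarefree ha hp hpa, smul_eq_mul]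

section Ordered

variable [LinearOrder R] [IsStrictOrderedRing R]

theorem divisorSum_prime_pow_mem_Icc {p : ℕ} (hp : p.Prime) (hχp : χ p = -1 ∨ χ p = 0) (k : ℕ) :
    χ.divisorSum (p ^ k) ∈ Set.Icc 0 1 := by
  rcases hχp with hχp | hχp
  · rw [divisorSum_prime_pow_of_eq_neg_one χ hp hχp]
    split_ifs <;> simp
  · simp [divisorSum_prime_pow_of_eq_zero χ hp hχp]

theorem divisorSum_le_one {n : ℕ} (h : ∀ p ∈ n.primeFactors, χ p = -1 ∨ χ p = 0) :
    χ.divisorSum n ≤ 1 := by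
  rcases eq_or_ne n 0 with rfl | hn
  · simp
  rw [IsMultiplicative.multiplicative_factorization _ χ.isMultiplicative_divisorSum hn,
    Nat.prod_factorization_eq_prod_primeFactors]
  have hmem p (hp : p ∈ n.primeFactors) :=
    divisorSum_prime_pow_mem_Icc χ (Nat.prime_of_mem_primeFactors hp) (h p hp) (n.factorization p)
  exact prod_le_one (fun p hp ↦ (hmem p hp).1) (fun p hp ↦ (hmem p hp).2)

end Ordered

end DirichletCharacter

theorem Nat.card_le_sum_sqrt_div_of_forall_eq_mul_sq {T : Finset ℕ} {N : ℕ} (P : ℕ → Prop)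
    [DecidablePred P] (hT : T ⊆ Icc 1 N) (h : ∀ n ∈ T, ∃ a b, n = a * b ^ 2 ∧ P a) :
    #T ≤ ∑ a ∈ Icc 1 N with P a, Nat.sqrt (N / a) := by
  calc #T ≤ #((({a ∈ Icc 1 N | P a}).sigma fun a ↦ Icc 1 (Nat.sqrt (N / a))).image
        fun x ↦ x.1 * x.2 ^ 2) := card_le_card fun n hn ↦ ?_
    _ ≤ _ := Finset.card_image_le
    _ = _ := by simp
  obtain ⟨a, b, rfl, ha⟩ := h n hn
  obtain ⟨hab, habN⟩ := mem_Icc.mp (hT hn)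
  have ha0 : 0 < a := Nat.pos_of_ne_zero fun h0 ↦ by simp [h0] at hab
  have hb0 : 0 < b := Nat.pos_of_ne_zero fun h0 ↦ by simp [h0] at hab
  have haN : a ≤ N := (Nat.le_mul_of_pos_right a (pow_pos hb0 2)).trans habN
  refine mem_image.mpr ⟨⟨a, b⟩, mem_sigma.mpr ⟨mem_filter.mpr ⟨mem_Icc.mpr ⟨ha0, haN⟩, ha⟩,
    mem_Icc.mpr ⟨hb0, ?_⟩⟩, rfl⟩
  rw [Nat.le_sqrt, Nat.le_div_iff_mul_le ha0]
  linarith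

theorem Nat.cast_sqrt_div_le (m n : ℕ) : (Nat.sqrt (m / n) : ℝ) ≤ √m / √n :=
  calc (Nat.sqrt (m / n) : ℝ) ≤ √((m / n : ℕ) : ℝ) := Real.nat_sqrt_le_real_sqrt
    _ ≤ √(m / n : ℝ) := Real.sqrt_le_sqrt Nat.cast_div_le
    _ = √m / √n := Real.sqrt_div' _ (Nat.cast_nonneg _)

theorem Nat.card_le_sqrt_mul_sum_of_forall_eq_mul_sq {T : Finset ℕ} {N : ℕ} (P : ℕ → Prop)
    [DecidablePred P] (hT : T ⊆ Icc 1 N) (h : ∀ n ∈ T, ∃ a b, n = a * b ^ 2 ∧ P a) :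
    (#T : ℝ) ≤ √N * ∑ a ∈ Icc 1 N with P a, (√a)⁻¹ :=
  calc (#T : ℝ) ≤ ∑ a ∈ Icc 1 N with P a, (Nat.sqrt (N / a) : ℝ) := by
        exact_mod_cast Nat.card_le_sum_sqrt_div_of_forall_eq_mul_sq P hT h
    _ ≤ ∑ a ∈ Icc 1 N with P a, √N / √a := sum_le_sum fun a _ ↦ Nat.cast_sqrt_div_le N a
    _ = √N * ∑ a ∈ Icc 1 N with P a, (√a)⁻¹ := by simp only [mul_sum, div_eq_mul_inv]

theorem sum_inv_sqrt_le_prod_of_subset_factoredNumbers {s A : Finset ℕ}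
    (hA : ∀ a ∈ A, a ∈ Nat.factoredNumbers s) :
    ∑ a ∈ A, (√a)⁻¹ ≤ ∏ p ∈ s with p.Prime, (1 - 1 / √p)⁻¹ := by
  classical
  let f : ℕ →* ℝ :=
    { toFun n := (√n)⁻¹
      map_one' := by simp
      map_mul' m n := by push_cast; rw [Real.sqrt_mul (Nat.cast_nonneg m), mul_inv] }
  have hf {p : ℕ} (hp : p.Prime) : ‖f p‖ < 1 := by
    have : (1 : ℝ) < √p := by
      rw [Real.lt_sqrt zero_le_one, one_pow]
      exact_mod_cast hp.one_lt
    simpa [f, abs_of_nonneg] using inv_lt_one_of_one_lt₀ this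
  obtain ⟨-, hsum⟩ :=
    EulerProduct.summable_and_hasSum_factoredNumbers_prod_filter_prime_geometric hf s
  calc ∑ a ∈ A, (√a)⁻¹ = ∑ a ∈ A.subtype (· ∈ Nat.factoredNumbers s), f a :=
        (sum_subtype_of_mem (fun a : ℕ ↦ (√a)⁻¹) hA).symm
    _ ≤ ∏ p ∈ s with p.Prime, (1 - f p)⁻¹ :=
        sum_le_hasSum _ (fun _ _ ↦ inv_nonneg.mpr (Real.sqrt_nonneg _)) hsum
    _ = ∏ p ∈ s with p.Prime, (1 - 1 / √p)⁻¹ := by simp [f]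

theorem stmt_10_general (q : ℕ) (hq : 2 ≤ q) (χ : DirichletCharacter ℝ q)
    (hquad : ∀ n : ℕ, χ n = -1 ∨ χ n = 0 ∨ χ n = 1)
    (x : ℝ) (hx : 1 ≤ x)
    (hnop : ∀ p : ℕ, p.Prime → (p : ℝ) ≤ x → χ p ≠ 1) :
    ∑ n ∈ Finset.Icc 1 ⌊x⌋₊, ∑ d ∈ n.divisors, χ d ≤
      Real.sqrt x * ∏ p ∈ q.primeFactors, (1 - 1 / Real.sqrt p)⁻¹ := by
  classical
  have : NeZero q := ⟨by omega⟩
  set N := ⌊x⌋₊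
  have hNx : (N : ℝ) ≤ x := Nat.floor_le (by linarith)
  have hχ {n : ℕ} (hn : n ∈ Icc 1 N) (p : ℕ) (hp : p ∈ n.primeFactors) : χ p = -1 ∨ χ p = 0 := by
    have hpN : p ≤ N := (Nat.le_of_mem_primeFactors hp).trans (mem_Icc.mp hn).2
    have := hnop p (Nat.prime_of_mem_primeFactors hp) (le_trans (by exact_mod_cast hpN) hNx)
    have := hquad p
    tauto
  set T := {n ∈ Icc 1 N | χ.divisorSum n ≠ 0}
  have hT : ∀ n ∈ T, ∃ a b, n = a * b ^ 2 ∧ a ∈ Nat.factoredNumbers q.primeFactors :=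
    fun n hn ↦ χ.exists_eq_mul_sq_of_divisorSum_ne_zero (hχ (mem_filter.mp hn).1)
      (mem_filter.mp hn).2
  calc ∑ n ∈ Icc 1 N, ∑ d ∈ n.divisors, χ d = ∑ n ∈ T, χ.divisorSum n := by
        simp only [← χ.divisorSum_apply, T, sum_filter_ne_zero]
    _ ≤ #T := by
        simpa using
          sum_le_card_nsmul T _ 1 fun n hn ↦ χ.divisorSum_le_one (hχ (mem_filter.mp hn).1)
    _ ≤ √N * ∑ a ∈ Icc 1 N with a ∈ Nat.factoredNumbers q.primeFactors, (√a)⁻¹ :=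
        Nat.card_le_sqrt_mul_sum_of_forall_eq_mul_sq _ (filter_subset _ _) hT
    _ ≤ √x * ∏ p ∈ q.primeFactors, (1 - 1 / √p)⁻¹ := by
        refine mul_le_mul (Real.sqrt_le_sqrt hNx) ?_ (sum_nonneg fun _ _ ↦ by positivity)
          (Real.sqrt_nonneg x)
        have hprime : {p ∈ q.primeFactors | p.Prime} = q.primeFactors :=
          filter_true_of_mem fun p hp ↦ Nat.prime_of_mem_primeFactors hp
        simpa only [hprime] using
          sum_inv_sqrt_le_prod_of_subset_factoredNumbers (s := q.primeFactors)
            fun a ha ↦ (mem_filter.mp ha).2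

theorem stmt_10 (q : ℕ) (hq : 2 ≤ q) (χ : DirichletCharacter ℝ q) (hχ : χ ≠ 1)
    (hquad : ∀ n : ℕ, χ n = -1 ∨ χ n = 0 ∨ χ n = 1)
    (x : ℝ) (hx : 1 ≤ x)
    (hnop : ∀ p : ℕ, p.Prime → (p : ℝ) ≤ x → χ p ≠ 1) :
    ∑ n ∈ Finset.Icc 1 ⌊x⌋₊, ∑ d ∈ n.divisors, χ d ≤
      Real.sqrt x * ∏ p ∈ q.primeFactors, (1 - 1 / Real.sqrt p)⁻¹ :=
  stmt_10_general q hq χ hquad x hx hnop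
end

section
/- Let χ be a non-principal Dirichlet character modulo q and x ≥ 1. Then |∑_{d ≤ x} χ(d){x/d}| ≤ √(2φ(q)x), where {t} denotes the fractional part of t. -/
/-!
Split the sum at `K = ⌊t⌋` with `t = √(φ(q) x / 2)`; the terms `d ≤ K` contribute at most `K ≤ t`.
The remaining `d` fall into at most `x / (K + 1)` blocks on which `⌊x / d⌋` is constant, so that
`{x / d}` decreases along each block. By Abel summation each block then contributes at most the
largest character sum over an interval, which is at most `φ(q) / 2`: an interval shorter than a
period and its complement in that period carry opposite sums and together contain `φ(q)` units.
Altogether the sum is at most `t + x φ(q) / (2t) = 2t`.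
-/

open Finset

theorem Function.Periodic.sum_Ico_add_eq_sum_range {M : Type*} [AddCommMonoid M] {f : ℕ → M}
    {q : ℕ} (hf : Function.Periodic f q) (a : ℕ) :
    ∑ d ∈ Ico a (a + q), f d = ∑ d ∈ range q, f d := by
  induction a with
  | zero => rw [zero_add, range_eq_Ico]
  | succ a ih =>
    rcases Nat.eq_zero_or_pos q with rfl | hq
    · simp
    rw [← ih, add_right_comm, sum_Ico_succ_top (show a + 1 ≤ a + q by omega),
      sum_eq_sum_Ico_succ_bot (show a < a + q by omega), hf a, add_comm]

theorem ZMod.sum_range_natCast {M : Type*} [AddCommMonoid M] (q : ℕ) [NeZero q]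
    (f : ZMod q → M) : ∑ d ∈ range q, f d = ∑ z, f z :=
  sum_nbij' (↑) ZMod.val (fun _ _ ↦ mem_univ _) (fun z _ ↦ mem_range.2 z.val_lt)
    (fun _ hd ↦ ZMod.val_cast_of_lt (mem_range.1 hd)) (fun z _ ↦ ZMod.natCast_zmod_val z)
    (fun _ _ ↦ rfl)

theorem Finset.sum_Ioc_smul_eq_sum_Ico_sub_smul {E : Type*} [AddCommGroup E] [Module ℝ E]
    (f : ℕ → ℝ) (g : ℕ → E) {a b : ℕ} (hab : a < b) :
    ∑ d ∈ Ioc a b, f d • g d = f b • ∑ d ∈ Ioc a b, g d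
      + ∑ d ∈ Ico (a + 1) b, (f d - f (d + 1)) • ∑ e ∈ Ioc a d, g e := by
  induction b, hab using Nat.le_induction with
  | base => simp
  | succ b hab ih =>
    rw [sum_Ioc_succ_top (by omega), sum_Ioc_succ_top (by omega), sum_Ico_succ_top hab, ih,
      sub_smul, smul_add]
    abel

theorem norm_sum_Ioc_smul_le_of_antitoneOn {E : Type*} [SeminormedAddCommGroup E]
    [NormedSpace ℝ E] {f : ℕ → ℝ} {g : ℕ → E} {a b : ℕ} {M : ℝ}
    (hg : ∀ t, ‖∑ d ∈ Ioc a t, g d‖ ≤ M) (hf : AntitoneOn f (Set.Ioc a b))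
    (hf01 : ∀ d ∈ Set.Ioc a b, f d ∈ Set.Icc 0 1) :
    ‖∑ d ∈ Ioc a b, f d • g d‖ ≤ M := by
  rcases le_or_gt b a with hba | hab
  · simpa [Ioc_eq_empty_of_le hba] using hg a
  have mem : ∀ d, a < d → d ≤ b → d ∈ Set.Ioc a b := fun d h₁ h₂ ↦ ⟨h₁, h₂⟩
  rw [sum_Ioc_smul_eq_sum_Ico_sub_smul f g hab]
  calc _ ≤ f b * M + ∑ d ∈ Ico (a + 1) b, (f d - f (d + 1)) * M := by
        refine (norm_add_le _ _).trans (add_le_add ?_ (norm_sum_le_of_le _ fun d hd ↦ ?_))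
        · rw [norm_smul, Real.norm_of_nonneg (hf01 b (mem b hab le_rfl)).1]
          exact mul_le_mul_of_nonneg_left (hg b) (hf01 b (mem b hab le_rfl)).1
        · rw [mem_Ico] at hd
          have hmono : f (d + 1) ≤ f d := hf (mem d (by omega) (by omega))
            (mem (d + 1) (by omega) (by omega)) (by omega)
          rw [norm_smul, Real.norm_of_nonneg (sub_nonneg.2 hmono)]
          exact mul_le_mul_of_nonneg_left (hg d) (sub_nonneg.2 hmono)
    _ = f (a + 1) * M := by
        have htel : ∑ d ∈ Ico (a + 1) b, (f d - f (d + 1)) = f (a + 1) - f b := by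
          rw [← neg_sub, ← sum_Ico_sub f hab, ← sum_neg_distrib]
          simp only [neg_sub]
        rw [← sum_mul, htel]
        ring
    _ ≤ M := mul_le_of_le_one_left ((norm_nonneg _).trans (hg a)) (hf01 _ (mem _ (by omega) hab)).2

theorem Nat.div_eq_of_div_lt_of_le_div {N n d : ℕ} (h₁ : N / (n + 2) < d) (h₂ : d ≤ N / (n + 1)) :
    N / d = n + 1 := by
  have hd : 0 < d := Nat.zero_lt_of_lt h₁
  refine le_antisymm (Nat.lt_succ_iff.1 ((Nat.div_lt_iff_lt_mul hd).2 ?_))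
    ((Nat.le_div_iff_mul_le hd).2 ?_)
  · rw [mul_comm]; exact (Nat.div_lt_iff_lt_mul (by omega)).1 h₁
  · rw [mul_comm]; exact (Nat.le_div_iff_mul_le (by omega)).1 h₂

theorem Finset.sum_range_sum_Ioc_of_antitone {M : Type*} [AddCommMonoid M] (F : ℕ → M)
    {u : ℕ → ℕ} (hu : Antitone u) (T : ℕ) :
    ∑ n ∈ range T, ∑ d ∈ Ioc (u (n + 1)) (u n), F d = ∑ d ∈ Ioc (u T) (u 0), F d := by
  induction T with
  | zero => simp
  | succ T ih =>
    rw [sum_range_succ, ih, add_comm, sum_Ioc_consecutive _ (hu T.le_succ) (hu T.zero_le)]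

theorem Int.fract_div_natCast_le {x : ℝ} (hx : 0 ≤ x) {d e : ℕ} (hd : 0 < d) (hde : d ≤ e)
    (h : ⌊x⌋₊ / d = ⌊x⌋₊ / e) : Int.fract (x / e) ≤ Int.fract (x / d) := by
  have hfloor (n : ℕ) : ⌊x / n⌋ = (⌊x⌋₊ / n : ℕ) := by
    rw [← Nat.floor_div_natCast, Int.natCast_floor_eq_floor (by positivity)]
  rw [Int.fract, Int.fract, hfloor, hfloor, h]
  gcongr

theorem norm_sum_Ioc_fract_div_smul_le {E : Type*} [SeminormedAddCommGroup E] [NormedSpace ℝ E]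
    {g : ℕ → E} {M : ℝ} (hg : ∀ a b, ‖∑ d ∈ Ioc a b, g d‖ ≤ M) {x : ℝ} (hx : 0 ≤ x) {K : ℕ}
    (hK : K ≤ ⌊x⌋₊) :
    ‖∑ d ∈ Ioc K ⌊x⌋₊, Int.fract (x / d) • g d‖ ≤ (⌊x⌋₊ / (K + 1) : ℕ) * M := by
  set N := ⌊x⌋₊
  -- the `n`-th block `Ioc (u (n + 1)) (u n)` consists of the `d > K` with `⌊x / d⌋ = n + 1`
  set u : ℕ → ℕ := fun n ↦ max K (N / (n + 1))
  have hu : Antitone u := fun m n hmn ↦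
    max_le_max le_rfl (Nat.div_le_div_left (by omega) (by omega))
  have hu0 : u 0 = N := by simp [u, hK]
  have huT : u (N / (K + 1)) = K := by
    refine max_eq_left (Nat.lt_succ_iff.1 ((Nat.div_lt_iff_lt_mul (Nat.succ_pos _)).2 ?_))
    simpa [mul_comm] using Nat.lt_mul_div_succ N (Nat.succ_pos K)
  have hblock : ∀ n, ∀ d ∈ Set.Ioc (u (n + 1)) (u n), N / d = n + 1 := by
    rintro n d ⟨h₁, h₂⟩
    simp only [u, max_lt_iff, le_max_iff] at h₁ h₂
    exact Nat.div_eq_of_div_lt_of_le_div h₁.2 (h₂.resolve_left (by omega))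
  have hsplit := sum_range_sum_Ioc_of_antitone (fun d ↦ Int.fract (x / d) • g d) hu (N / (K + 1))
  rw [hu0, huT] at hsplit
  rw [← hsplit]
  refine (norm_sum_le_of_le _ fun n _ ↦ norm_sum_Ioc_smul_le_of_antitoneOn (hg _) ?_ ?_).trans
    (by simp)
  · intro d hd e he hde
    exact Int.fract_div_natCast_le hx (by have := hd.1; omega) hde
      (by rw [hblock n d hd, hblock n e he])
  · exact fun d _ ↦ ⟨Int.fract_nonneg _, (Int.fract_lt_one _).le⟩

namespace DirichletCharacter

section Domain

variable {R : Type*} [CommRing R] [IsDomain R] {q : ℕ} [NeZero q] {χ : DirichletCharacter R q}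

theorem sum_Ico_add_eq_zero (hχ : χ ≠ 1) (a : ℕ) : ∑ d ∈ Ico a (a + q), χ d = 0 := by
  have hper : Function.Periodic (fun d : ℕ ↦ χ d) q := fun d ↦ by simp
  rw [hper.sum_Ico_add_eq_sum_range, ZMod.sum_range_natCast q χ, MulChar.sum_eq_zero_of_ne_one hχ]

theorem sum_Ico_add_mul_eq_zero (hχ : χ ≠ 1) (a k : ℕ) : ∑ d ∈ Ico a (a + q * k), χ d = 0 := by
  induction k with
  | zero => simp
  | succ k ih =>
    rw [← sum_Ico_consecutive _ (show a ≤ a + q * k by omega)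
      (show a + q * k ≤ a + q * (k + 1) by rw [mul_add]; omega), ih, mul_add_one, ← add_assoc,
      sum_Ico_add_eq_zero hχ, add_zero]

end Domain

section NormedField

variable {F : Type*} [NormedField F] {q : ℕ}

theorem norm_sum_le_card_filter_coprime (χ : DirichletCharacter F q) (s : Finset ℕ) :
    ‖∑ d ∈ s, χ d‖ ≤ #{d ∈ s | q.Coprime d} := by
  rw [← sum_filter_of_ne (p := fun d ↦ q.Coprime d) fun d _ hd ↦ ?_]
  · simpa using norm_sum_le_of_le _ fun (d : ℕ) _ ↦ χ.norm_le_one d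
  · rw [Nat.coprime_comm, ← ZMod.isUnit_iff_coprime]
    by_contra hu
    exact hd (χ.map_nonunit hu)

variable [NeZero q] {χ : DirichletCharacter F q}

theorem norm_sum_Ico_le_totient_div_two_of_le (hχ : χ ≠ 1) {a b : ℕ} (hab : a ≤ b)
    (hb : b ≤ a + q) : ‖∑ d ∈ Ico a b, χ d‖ ≤ q.totient / 2 := by
  have hsum : ∑ d ∈ Ico a b, χ d = -∑ d ∈ Ico b (a + q), χ d := by
    rw [eq_neg_iff_add_eq_zero, sum_Ico_consecutive _ hab hb, sum_Ico_add_eq_zero hχ]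
  have hcard : #{d ∈ Ico a b | q.Coprime d} + #{d ∈ Ico b (a + q) | q.Coprime d} = q.totient := by
    rw [← card_union_of_disjoint (disjoint_filter_filter (Ico_disjoint_Ico_consecutive a b _)),
      ← filter_union, Ico_union_Ico_eq_Ico hab hb, Nat.filter_coprime_Ico_eq_totient]
  have h₁ := χ.norm_sum_le_card_filter_coprime (Ico a b)
  have h₂ := χ.norm_sum_le_card_filter_coprime (Ico b (a + q))
  rw [← norm_neg, ← hsum] at h₂
  have hφ : (q.totient : ℝ) = _ := congrArg Nat.cast hcard.symm
  push_cast at hφ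
  linarith

theorem norm_sum_Ico_le_totient_div_two (hχ : χ ≠ 1) (a b : ℕ) :
    ‖∑ d ∈ Ico a b, χ d‖ ≤ q.totient / 2 := by
  rcases le_total b a with hba | hab
  · simpa [Ico_eq_empty_of_le hba] using by positivity
  obtain ⟨k, r, hr, rfl⟩ : ∃ k r, r < q ∧ b = a + q * k + r :=
    ⟨(b - a) / q, (b - a) % q, Nat.mod_lt _ (NeZero.pos q), by
      have := Nat.div_add_mod (b - a) q; omega⟩
  rw [← sum_Ico_consecutive _ (Nat.le_add_right a _) (Nat.le_add_right _ r),
    sum_Ico_add_mul_eq_zero hχ, zero_add]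
  exact norm_sum_Ico_le_totient_div_two_of_le hχ (Nat.le_add_right _ _) (by omega)

theorem norm_sum_Ioc_le_totient_div_two (hχ : χ ≠ 1) (a b : ℕ) :
    ‖∑ d ∈ Ioc a b, χ d‖ ≤ q.totient / 2 := by
  rw [← Ico_add_one_add_one_eq_Ioc]
  exact norm_sum_Ico_le_totient_div_two hχ _ _

end NormedField

theorem norm_sum_mul_fract_le_card {q : ℕ} (χ : DirichletCharacter ℂ q) (s : Finset ℕ) (y : ℕ → ℝ) :
    ‖∑ d ∈ s, χ d * ((Int.fract (y d) : ℝ) : ℂ)‖ ≤ #s := by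
  refine (norm_sum_le_of_le s (n := fun _ ↦ 1) fun d _ ↦ ?_).trans (by simp)
  rw [norm_mul, Complex.norm_real, Real.norm_of_nonneg (Int.fract_nonneg _)]
  exact mul_le_one₀ (χ.norm_le_one _) (Int.fract_nonneg _) (Int.fract_lt_one _).le

theorem norm_sum_Ioc_mul_fract_div_le {q : ℕ} [NeZero q] {χ : DirichletCharacter ℂ q} (hχ : χ ≠ 1)
    {x : ℝ} (hx : 0 ≤ x) {K : ℕ} (hK : K ≤ ⌊x⌋₊) :
    ‖∑ d ∈ Ioc 0 ⌊x⌋₊, χ d * ((Int.fract (x / d) : ℝ) : ℂ)‖ ≤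
      K + x / (K + 1) * (q.totient / 2) := by
  rw [← sum_Ioc_consecutive _ K.zero_le hK]
  refine (norm_add_le _ _).trans (add_le_add ?_ ?_)
  · simpa using χ.norm_sum_mul_fract_le_card (Ioc 0 K) fun d ↦ x / d
  · simp_rw [mul_comm (χ _), ← Complex.real_smul]
    refine (norm_sum_Ioc_fract_div_smul_le (norm_sum_Ioc_le_totient_div_two hχ) hx hK).trans ?_
    gcongr
    exact Nat.cast_div_le.trans (by push_cast; gcongr; exact Nat.floor_le hx)

end DirichletCharacter

theorem stmt_12 (q : ℕ) (hq : 2 ≤ q) (χ : DirichletCharacter ℂ q) (hχ : χ ≠ 1)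
    (x : ℝ) (hx : 1 ≤ x) :
    ‖∑ d ∈ Finset.Icc 1 ⌊x⌋₊, χ d * ((Int.fract (x / (d : ℝ)) : ℝ) : ℂ)‖ ≤
      Real.sqrt (2 * Nat.totient q * x) := by
  have : NeZero q := ⟨by omega⟩
  set t := √(q.totient * x / 2)
  have ht : 0 < t := Real.sqrt_pos.2 (by have := q.totient_pos.2 (NeZero.pos q); positivity)
  have hsqrt : √(2 * q.totient * x) = 2 * t := by
    rw [show 2 * (q.totient : ℝ) * x = 2 ^ 2 * (q.totient * x / 2) by ring,
      Real.sqrt_mul' _ (by positivity), Real.sqrt_sq zero_le_two]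
  have hKt : (⌊t⌋₊ : ℝ) ≤ t := Nat.floor_le ht.le
  rw [hsqrt, show Icc 1 ⌊x⌋₊ = Ioc 0 ⌊x⌋₊ from Icc_add_one_left_eq_Ioc 0 _]
  rcases le_total ⌊x⌋₊ ⌊t⌋₊ with hN | hN
  · calc _ ≤ (#(Ioc 0 ⌊x⌋₊) : ℝ) := χ.norm_sum_mul_fract_le_card _ _
      _ ≤ ⌊t⌋₊ := by simpa using hN
      _ ≤ 2 * t := by linarith
  · calc _ ≤ ⌊t⌋₊ + x / (⌊t⌋₊ + 1) * (q.totient / 2) :=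
          χ.norm_sum_Ioc_mul_fract_div_le hχ (by linarith) hN
      _ ≤ t + x / t * (q.totient / 2) := by gcongr; exact (Nat.lt_floor_add_one t).le
      _ = 2 * t := by
          field_simp
          rw [Real.sq_sqrt (by positivity)]
          ring
end

section
/- Let G be a finite abelian group (written multiplicatively), let A ⊆ G with |A| ≥ (13/32)|G|, and suppose A generates G. Then |A·A| ≥ (7/10)|G|, where A·A = {a₁a₂ : a₁, a₂ ∈ A}. -/
open Pointwise

set_option linter.unusedSectionVars false
set_option linter.unusedTactic false
set_option linter.unnecessarySeqFocus false
set_option linter.unusedVariables false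
set_option maxHeartbeats 1000000

open Finset

section WK
variable {G : Type*} [CommGroup G] [Fintype G] [DecidableEq G]

private lemma transform_mul_subset (A B : Finset G) (e : G) :
    (A ∪ e • B) * (B ∩ e⁻¹ • A) ⊆ A * B := by
  intro x hx
  rw [Finset.mem_mul] at hx
  obtain ⟨y, hy, z, hz, rfl⟩ := hx
  rw [Finset.mem_union] at hy
  rw [Finset.mem_inter] at hz
  obtain ⟨hz1, hz2⟩ := hz
  rcases hy with hy | hy
  · exact mul_mem_mul hy hz1
  · rw [Finset.mem_smul_finset] at hy
    rw [Finset.mem_smul_finset] at hz2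
    obtain ⟨b, hb, rfl⟩ := hy
    obtain ⟨a, ha, rfl⟩ := hz2
    refine Finset.mem_mul.2 ⟨a, ha, b, hb, ?_⟩
    simp only [smul_eq_mul]
    rw [mul_mul_mul_comm, mul_comm a b, mul_inv_cancel, one_mul]

private lemma transform_card (A B : Finset G) (e : G) :
    (A ∪ e • B).card + (B ∩ e⁻¹ • A).card = A.card + B.card := by
  have h1 : A ∩ e • B = e • (B ∩ e⁻¹ • A) := by
    rw [smul_finset_inter, smul_inv_smul, Finset.inter_comm]
  have h2 := Finset.card_union_add_card_inter A (e • B)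
  rw [h1, Finset.card_smul_finset] at h2
  rw [h2, Finset.card_smul_finset]

private lemma smul_mul_singleton (X : Finset G) (k c : G) :
    k • (X * {c}) = (k • X) * {c} := by
  ext x
  simp only [Finset.mem_smul_finset, Finset.mem_mul, Finset.mem_singleton, smul_eq_mul]
  constructor
  · rintro ⟨y, ⟨a, ha, b, rfl, rfl⟩, rfl⟩
    exact ⟨k * a, ⟨a, ha, rfl⟩, b, rfl, mul_assoc _ _ _⟩
  · rintro ⟨y, ⟨a, ha, rfl⟩, b, rfl, rfl⟩
    exact ⟨a * b, ⟨a, ha, b, rfl, rfl⟩, (mul_assoc _ _ _).symm⟩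

/-- Weak Kneser: there is a subgroup `K` and a `K`-stable subset `C` of `A*B`
containing a translate of `A`, with `|C| + |K| ≥ |A| + |B|`. -/
theorem weak_kneser (B A : Finset G) (hA : A.Nonempty) (hB : B.Nonempty) :
    ∃ (K : Subgroup G) (C : Finset G) (b₀ : G), b₀ ∈ B ∧ C ⊆ A * B ∧
      (∀ k ∈ K, k • C = C) ∧ A * {b₀} ⊆ C ∧
      A.card + B.card ≤ C.card + Nat.card K := by
  induction B using Finset.strongInduction generalizing A with
  | _ B ih =>
  by_cases hcase : ∃ a ∈ A, ∃ b ∈ B, (B ∩ (a * b⁻¹)⁻¹ • A) ⊂ B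
  · obtain ⟨a, ha, b', hb', hss⟩ := hcase
    set e := a * b'⁻¹ with he
    have hb'mem : b' ∈ B ∩ e⁻¹ • A := by
      rw [Finset.mem_inter]
      refine ⟨hb', Finset.mem_smul_finset.2 ⟨a, ha, ?_⟩⟩
      simp only [he, smul_eq_mul]
      group
    obtain ⟨K, C, b₀, hb₀, hCsub, hstab, hAb₀, hcard⟩ :=
      ih (B ∩ e⁻¹ • A) hss (A ∪ e • B) (hA.mono Finset.subset_union_left)
        ⟨b', hb'mem⟩
    refine ⟨K, C, b₀, (Finset.mem_inter.1 hb₀).1,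
      hCsub.trans (transform_mul_subset A B e), hstab,
      (Finset.mul_subset_mul_right Finset.subset_union_left).trans hAb₀, ?_⟩
    calc A.card + B.card = (A ∪ e • B).card + (B ∩ e⁻¹ • A).card :=
          (transform_card A B e).symm
      _ ≤ C.card + Nat.card K := hcard
  · push_neg at hcase
    -- no proper transform: B/B stabilizes A
    have hkey : ∀ x ∈ A, ∀ b ∈ B, ∀ b' ∈ B, b * b'⁻¹ * x ∈ A := by
      intro x hx b hb b' hb'
      have h := hcase x hx b' hb'
      have hsub : B ⊆ (x * b'⁻¹)⁻¹ • A := by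
        by_contra hno
        exact h ⟨Finset.inter_subset_left, fun hBs => hno fun y hy =>
          (Finset.mem_inter.1 (hBs hy)).2⟩
      have := hsub hb
      rw [Finset.mem_smul_finset] at this
      obtain ⟨α, hα, hEq⟩ := this
      have heq2 : b * b'⁻¹ * x = α := by
        rw [← hEq]
        simp only [smul_eq_mul, mul_inv_rev, inv_inv]
        have : b' * x⁻¹ * α * b'⁻¹ * x = (b' * b'⁻¹) * (x⁻¹ * x) * α := by ac_rfl
        rw [this, mul_inv_cancel, inv_mul_cancel, one_mul, one_mul]
      rwa [heq2]
    set K := MulAction.stabilizer G A with hK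
    letI : DecidablePred (· ∈ K) :=
      fun g => decidable_of_iff (g • A = A) (MulAction.mem_stabilizer_iff).symm
    obtain ⟨b₀, hb₀⟩ := hB
    have hBK : ∀ b ∈ B, b * b₀⁻¹ ∈ K := by
      intro b hb
      rw [hK, MulAction.mem_stabilizer_iff]
      apply Finset.eq_of_subset_of_card_le
      · intro y hy
        rw [Finset.mem_smul_finset] at hy
        obtain ⟨x, hx, rfl⟩ := hy
        exact hkey x hx b hb b₀ hb₀
      · rw [Finset.card_smul_finset]
    refine ⟨K, A * {b₀}, b₀, hb₀, Finset.mul_subset_mul_left (by simpa using hb₀),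
      ?_, le_refl _, ?_⟩
    · intro k hk
      rw [smul_mul_singleton, MulAction.mem_stabilizer_iff.1 hk]
    · have hcA : (A * {b₀}).card = A.card := by
        rw [Finset.mul_singleton]
        exact Finset.card_image_of_injective _ (mul_left_injective b₀)
      have hBsub : B ⊆ b₀ • (Finset.univ.filter (· ∈ K)) := by
        intro b hb
        rw [Finset.mem_smul_finset]
        refine ⟨b₀⁻¹ * b, ?_, by simp⟩
        simp only [Finset.mem_filter, Finset.mem_univ, true_and]
        have h1 := hBK b hb
        rwa [mul_comm b₀⁻¹ b]
      have hKcard : (Finset.univ.filter (· ∈ K)).card = Nat.card K := by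
        rw [Nat.card_eq_fintype_card, Fintype.card_subtype]
      have hBcard : B.card ≤ Nat.card K := by
        calc B.card ≤ (b₀ • (Finset.univ.filter (· ∈ K))).card :=
              Finset.card_le_card hBsub
          _ = (Finset.univ.filter (· ∈ K)).card := Finset.card_smul_finset _ _
          _ = Nat.card K := hKcard
      omega
end WK

section QH
variable {G : Type*} [CommGroup G] [Fintype G] [DecidableEq G]
variable (K : Subgroup G) [DecidablePred (· ∈ K)]
variable [Fintype (G ⧸ K)] [DecidableEq (G ⧸ K)]

private lemma mem_coset_iff (g x : G) :
    QuotientGroup.mk' K x = QuotientGroup.mk' K g ↔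
      x ∈ g • (Finset.univ.filter (· ∈ K)) := by
  rw [Finset.mem_smul_finset]
  constructor
  · intro h
    refine ⟨g⁻¹ * x, ?_, by simp⟩
    simp only [Finset.mem_filter, Finset.mem_univ, true_and]
    have := (QuotientGroup.mk'_eq_mk' (N := K)).1 h
    obtain ⟨z, hz, hEq⟩ := this
    -- x * z = g, z ∈ K
    have : g⁻¹ * x = z⁻¹ := by rw [← hEq]; group
    rw [this]; exact K.inv_mem hz
  · rintro ⟨k, hk, rfl⟩
    simp only [Finset.mem_filter, Finset.mem_univ, true_and] at hk
    have h1 : QuotientGroup.mk' K k = 1 := (QuotientGroup.eq_one_iff k).2 hk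
    simp only [smul_eq_mul, map_mul, h1, mul_one]

private lemma card_coset_filter (γ : G ⧸ K) :
    (Finset.univ.filter (fun x => QuotientGroup.mk' K x = γ)).card = Nat.card K := by
  induction γ using QuotientGroup.induction_on with
  | H g =>
    rw [show ((g : G ⧸ K)) = QuotientGroup.mk' K g from rfl]
    have : Finset.univ.filter (fun x => QuotientGroup.mk' K x = QuotientGroup.mk' K g)
        = g • (Finset.univ.filter (· ∈ K)) := by
      ext x; simp only [Finset.mem_filter, Finset.mem_univ, true_and]
      exact mem_coset_iff K g x
    rw [this, Finset.card_smul_finset, Nat.card_eq_fintype_card, Fintype.card_subtype]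

private lemma card_stable_filter {C : Finset G} (hstab : ∀ k ∈ K, k • C = C)
    {γ : G ⧸ K} (hγ : γ ∈ C.image (QuotientGroup.mk' K)) :
    (C.filter (fun x => QuotientGroup.mk' K x = γ)).card = Nat.card K := by
  rw [Finset.mem_image] at hγ
  obtain ⟨g, hg, rfl⟩ := hγ
  have heq : C.filter (fun x => QuotientGroup.mk' K x = QuotientGroup.mk' K g)
      = g • (Finset.univ.filter (· ∈ K)) := by
    ext x
    simp only [Finset.mem_filter]
    constructor
    · rintro ⟨-, hx⟩
      exact (mem_coset_iff K g x).1 hx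
    · intro hx
      have hx' := (mem_coset_iff K g x).2 hx
      refine ⟨?_, hx'⟩
      rw [Finset.mem_smul_finset] at hx
      obtain ⟨k, hk, rfl⟩ := hx
      simp only [Finset.mem_filter, Finset.mem_univ, true_and] at hk
      have : g * k = k • g := by simp [smul_eq_mul, mul_comm]
      rw [smul_eq_mul, mul_comm, ← smul_eq_mul, ← hstab k hk]
      exact Finset.smul_mem_smul_finset hg
  rw [heq, Finset.card_smul_finset, Nat.card_eq_fintype_card, Fintype.card_subtype]

/-- card of a K-stable set = (number of cosets) * |K| -/
private lemma card_stable (C : Finset G) (hstab : ∀ k ∈ K, k • C = C) :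
    C.card = (C.image (QuotientGroup.mk' K)).card * Nat.card K := by
  rw [Finset.card_eq_sum_card_fiberwise
    (f := QuotientGroup.mk' K) (t := C.image (QuotientGroup.mk' K))
    (fun x hx => Finset.mem_image_of_mem _ hx)]
  rw [Finset.sum_congr rfl (fun γ hγ => card_stable_filter K hstab hγ), Finset.sum_const,
    smul_eq_mul]
end QH

section SIX
variable {Q : Type*} [CommGroup Q] [Fintype Q] [DecidableEq Q]

private lemma two_torsion_unique (h6 : Fintype.card Q = 6) {x y : Q}
    (hx1 : x ≠ 1) (hy1 : y ≠ 1) (hx : x ^ 2 = 1) (hy : y ^ 2 = 1) : x = y := by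
  by_contra hxy
  set T := (powMonoidHom 2 : Q →* Q).ker with hT
  letI : DecidablePred (· ∈ T) := fun g =>
    decidable_of_iff (g ^ 2 = 1) (by simp only [hT, MonoidHom.mem_ker, powMonoidHom_apply])
  have hsub : ({1, x, y} : Finset Q) ⊆ Finset.univ.filter (· ∈ T) := by
    intro t ht
    simp only [Finset.mem_insert, Finset.mem_singleton] at ht
    simp only [Finset.mem_filter, Finset.mem_univ, true_and, hT, MonoidHom.mem_ker,
      powMonoidHom_apply]
    rcases ht with rfl | rfl | rfl
    · exact one_pow 2
    · exact hx
    · exact hy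
  have hcard3 : 3 ≤ Nat.card T := by
    have h1 : ({1, x, y} : Finset Q).card = 3 := by
      rw [Finset.card_insert_of_notMem (by simp [hx1.symm, hy1.symm]),
        Finset.card_insert_of_notMem (by simp [hxy]), Finset.card_singleton]
    calc 3 = ({1, x, y} : Finset Q).card := h1.symm
      _ ≤ (Finset.univ.filter (· ∈ T)).card := Finset.card_le_card hsub
      _ = Nat.card T := by rw [Nat.card_eq_fintype_card, Fintype.card_subtype]
  have hdvd : Nat.card T ∣ 6 := by
    rw [← h6, ← Nat.card_eq_fintype_card]
    exact Subgroup.card_subgroup_dvd_card T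
  have h36 : Nat.card T = 3 ∨ Nat.card T = 6 := by
    have hle : Nat.card T ≤ 6 := Nat.le_of_dvd (by norm_num) hdvd
    interval_cases h : Nat.card ↥T
    · exact Or.inl rfl
    · exact absurd hdvd (by decide)
    · exact absurd hdvd (by decide)
    · exact Or.inr rfl
  have h3dvd : 3 ∣ Fintype.card T := by
    rw [← Nat.card_eq_fintype_card]
    rcases h36 with h | h <;> rw [h] <;> norm_num
  obtain ⟨t, ht⟩ := exists_prime_orderOf_dvd_card (G := T) 3 h3dvd
  have ht2 : (t : Q) ^ 2 = 1 := by
    have h := t.2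
    simp only [hT, MonoidHom.mem_ker, powMonoidHom_apply] at h
    exact h
  have htpow : t ^ 3 = 1 := by rw [← ht]; exact pow_orderOf_eq_one t
  have ht3 : (t : Q) ^ 3 = 1 := by
    rw [← SubmonoidClass.coe_pow, htpow, OneMemClass.coe_one]
  have htQ : (t : Q) = 1 := by
    have h3 : (t : Q) ^ 3 = (t : Q) ^ 2 * (t : Q) := by rw [pow_succ]
    rw [h3, ht2, one_mul] at ht3
    exact ht3
  have ht1 : t = 1 := by exact_mod_cast htQ
  rw [ht1, orderOf_one] at ht
  norm_num at ht

private lemma ker_pow3_index (h6 : Fintype.card Q = 6) :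
    (powMonoidHom 3 : Q →* Q).ker.index = 2 := by
  set M := (powMonoidHom 3 : Q →* Q).ker with hM
  have hmem : ∀ x : Q, x ∈ M ↔ x ^ 3 = 1 := fun x => by
    rw [hM, MonoidHom.mem_ker, powMonoidHom_apply]
  letI : DecidablePred (· ∈ M) := fun g => decidable_of_iff (g ^ 3 = 1) (hmem g).symm
  obtain ⟨c, hc⟩ := exists_prime_orderOf_dvd_card (G := Q) 3 (by rw [h6]; norm_num)
  obtain ⟨y, hy⟩ := exists_prime_orderOf_dvd_card (G := Q) 2 (by rw [h6]; norm_num)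
  have hc1 : c ≠ 1 := by intro h; rw [h, orderOf_one] at hc; norm_num at hc
  have hc3 : c ^ 3 = 1 := by rw [← hc]; exact pow_orderOf_eq_one c
  have hc2ne : c ^ 2 ≠ 1 := by
    intro h
    have h2 := orderOf_dvd_of_pow_eq_one h
    rw [hc] at h2
    norm_num at h2
  have hccne : c ^ 2 ≠ c := by
    intro h
    rw [pow_two] at h
    apply hc1
    calc c = c⁻¹ * (c * c) := by group
      _ = c⁻¹ * c := by rw [h]
      _ = 1 := by group
  have hsub : ({1, c, c ^ 2} : Finset Q) ⊆ Finset.univ.filter (· ∈ M) := by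
    intro t ht
    simp only [Finset.mem_insert, Finset.mem_singleton] at ht
    simp only [Finset.mem_filter, Finset.mem_univ, true_and, hmem]
    rcases ht with rfl | rfl | rfl
    · exact one_pow 3
    · exact hc3
    · rw [← pow_mul, show 2 * 3 = 3 * 2 by ring, pow_mul, hc3, one_pow]
  have hcard3 : 3 ≤ Nat.card M := by
    have h1 : ({1, c, c ^ 2} : Finset Q).card = 3 := by
      rw [Finset.card_insert_of_notMem (by simp [hc1.symm, hc2ne.symm]),
        Finset.card_insert_of_notMem (by simp [hccne.symm]), Finset.card_singleton]
    calc 3 = ({1, c, c ^ 2} : Finset Q).card := h1.symm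
      _ ≤ (Finset.univ.filter (· ∈ M)).card := Finset.card_le_card hsub
      _ = Nat.card M := by rw [Nat.card_eq_fintype_card, Fintype.card_subtype]
  have hdvd : Nat.card M ∣ 6 := by
    rw [← h6, ← Nat.card_eq_fintype_card]
    exact Subgroup.card_subgroup_dvd_card M
  have hMne : Nat.card M ≠ 6 := by
    intro h
    have hMtop : M = ⊤ := by
      apply Subgroup.eq_top_of_card_eq
      rw [h, Nat.card_eq_fintype_card, h6]
    have hyM : y ∈ M := by rw [hMtop]; trivial
    rw [hmem] at hyM
    have hy2 : y ^ 2 = 1 := by rw [← hy]; exact pow_orderOf_eq_one y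
    have hy1' : y = 1 := by
      have h3 : y ^ 3 = y ^ 2 * y := by rw [pow_succ]
      rw [h3, hy2, one_mul] at hyM
      exact hyM
    rw [hy1', orderOf_one] at hy
    norm_num at hy
  have hM3 : Nat.card M = 3 := by
    have hle : Nat.card M ≤ 6 := Nat.le_of_dvd (by norm_num) hdvd
    interval_cases h : Nat.card ↥M
    · rfl
    · exact absurd hdvd (by decide)
    · exact absurd hdvd (by decide)
    · exact absurd rfl hMne
  have hfin := Subgroup.card_mul_index M
  rw [hM3, Nat.card_eq_fintype_card, h6] at hfin
  omega
end SIX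

section SIX2
variable {Q : Type*} [CommGroup Q] [Fintype Q] [DecidableEq Q]

private lemma sq_ne_of_cube_eq {b c : Q} (hbc : b ≠ c) (h3 : b ^ 3 = c ^ 3) :
    b * b ≠ c * c := by
  intro h2
  apply hbc
  calc b = b ^ 3 * (b * b)⁻¹ := by group
    _ = c ^ 3 * (c * c)⁻¹ := by rw [h3, h2]
    _ = c := by group

private lemma card_five_subset {S : Finset Q} (p₁ p₂ p₃ p₄ p₅ : Q)
    (h₁ : p₁ ∈ S) (h₂ : p₂ ∈ S) (h₃ : p₃ ∈ S) (h₄ : p₄ ∈ S) (h₅ : p₅ ∈ S)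
    (d12 : p₁ ≠ p₂) (d13 : p₁ ≠ p₃) (d14 : p₁ ≠ p₄) (d15 : p₁ ≠ p₅)
    (d23 : p₂ ≠ p₃) (d24 : p₂ ≠ p₄) (d25 : p₂ ≠ p₅)
    (d34 : p₃ ≠ p₄) (d35 : p₃ ≠ p₅) (d45 : p₄ ≠ p₅) : 5 ≤ S.card := by
  have hsub : ({p₁, p₂, p₃, p₄, p₅} : Finset Q) ⊆ S := by
    intro z hz
    simp only [Finset.mem_insert, Finset.mem_singleton] at hz
    rcases hz with rfl | rfl | rfl | rfl | rfl <;> assumption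
  have hcard : ({p₁, p₂, p₃, p₄, p₅} : Finset Q).card = 5 := by
    rw [Finset.card_insert_of_notMem (by simp [d12, d13, d14, d15]),
      Finset.card_insert_of_notMem (by simp [d23, d24, d25]),
      Finset.card_insert_of_notMem (by simp [d34, d35]),
      Finset.card_insert_of_notMem (by simp [d45]), Finset.card_singleton]
  calc 5 = ({p₁, p₂, p₃, p₄, p₅} : Finset Q).card := hcard.symm
    _ ≤ S.card := Finset.card_le_card hsub

private lemma five_prod_A (h6 : Fintype.card Q = 6) (a b c : Q)
    (hab : a ≠ b) (hac : a ≠ c) (hbc : b ≠ c)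
    (ha : a ^ 3 = 1) (hb : b ^ 3 ≠ 1) (hc : c ^ 3 ≠ 1) :
    5 ≤ (({a, b, c} : Finset Q) * {a, b, c}).card := by
  have hord : ∀ x : Q, x ^ 6 = 1 := fun x => by rw [← h6]; exact pow_card_eq_one
  have hsix : ∀ u : Q, u ^ 3 * u ^ 3 = 1 := fun u => by
    rw [← pow_add]; exact hord u
  have hb3c3 : b ^ 3 = c ^ 3 := by
    apply two_torsion_unique h6 hb hc
    · rw [← pow_mul, show 3 * 2 = 6 by ring]; exact hord b
    · rw [← pow_mul, show 3 * 2 = 6 by ring]; exact hord c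
  have cube_mul : ∀ u v : Q, (u * v) ^ 3 = u ^ 3 * v ^ 3 := fun u v => mul_pow u v 3
  have hmemA : a ∈ ({a, b, c} : Finset Q) := by simp
  have hmemB : b ∈ ({a, b, c} : Finset Q) := by simp
  have hmemC : c ∈ ({a, b, c} : Finset Q) := by simp
  apply card_five_subset (a*b) (a*c) (b*b) (c*c) (b*c)
    (Finset.mul_mem_mul hmemA hmemB) (Finset.mul_mem_mul hmemA hmemC)
    (Finset.mul_mem_mul hmemB hmemB) (Finset.mul_mem_mul hmemC hmemC)
    (Finset.mul_mem_mul hmemB hmemC)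
  · exact fun h => hbc (mul_left_cancel h)
  · exact fun h => hab (mul_right_cancel h)
  · intro h
    apply hb
    have h3 : (a*b)^3 = (c*c)^3 := by rw [h]
    rw [cube_mul, cube_mul, ha, one_mul] at h3
    rw [h3]; exact hsix c
  · exact fun h => hac (mul_right_cancel (h.trans (mul_comm b c)))
  · intro h
    apply hc
    have h3 : (a*c)^3 = (b*b)^3 := by rw [h]
    rw [cube_mul, cube_mul, ha, one_mul] at h3
    rw [h3]; exact hsix b
  · exact fun h => hac (mul_right_cancel h)
  · exact fun h => hab (mul_right_cancel h)
  · exact sq_ne_of_cube_eq hbc hb3c3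
  · exact fun h => hbc (mul_left_cancel h)
  · exact fun h => hbc (mul_right_cancel h).symm

private lemma five_prod_B (h6 : Fintype.card Q = 6) (a b c : Q)
    (hab : a ≠ b) (hac : a ≠ c) (hbc : b ≠ c)
    (ha : a ^ 3 = 1) (hb : b ^ 3 = 1) (hc : c ^ 3 ≠ 1) :
    5 ≤ (({a, b, c} : Finset Q) * {a, b, c}).card := by
  have hord : ∀ x : Q, x ^ 6 = 1 := fun x => by rw [← h6]; exact pow_card_eq_one
  have cube_mul : ∀ u v : Q, (u * v) ^ 3 = u ^ 3 * v ^ 3 := fun u v => mul_pow u v 3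
  have hmemA : a ∈ ({a, b, c} : Finset Q) := by simp
  have hmemB : b ∈ ({a, b, c} : Finset Q) := by simp
  have hmemC : c ∈ ({a, b, c} : Finset Q) := by simp
  apply card_five_subset (a*c) (b*c) (a*a) (a*b) (b*b)
    (Finset.mul_mem_mul hmemA hmemC) (Finset.mul_mem_mul hmemB hmemC)
    (Finset.mul_mem_mul hmemA hmemA) (Finset.mul_mem_mul hmemA hmemB)
    (Finset.mul_mem_mul hmemB hmemB)
  · exact fun h => hab (mul_right_cancel h)
  · exact fun h => hac (mul_left_cancel h).symm
  · exact fun h => hbc (mul_left_cancel h).symm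
  · intro h
    apply hc
    have h3 : (a*c)^3 = (b*b)^3 := by rw [h]
    rw [cube_mul, cube_mul, ha, hb, one_mul, one_mul] at h3
    exact h3
  · intro h
    apply hc
    have h3 : (b*c)^3 = (a*a)^3 := by rw [h]
    rw [cube_mul, cube_mul, ha, hb, one_mul, one_mul] at h3
    exact h3
  · exact fun h => hac (mul_left_cancel (h.trans (mul_comm a b))).symm
  · exact fun h => hbc (mul_left_cancel h).symm
  · exact fun h => hab (mul_left_cancel h)
  · exact sq_ne_of_cube_eq hab (ha.trans hb.symm)
  · exact fun h => hab (mul_right_cancel h)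

private lemma five_of_mixed (h6 : Fintype.card Q = 6) (X : Finset Q)
    (hX : X.card = 3) (hmix1 : ∃ u ∈ X, u ^ 3 = 1) (hmix2 : ∃ v ∈ X, v ^ 3 ≠ 1) :
    5 ≤ (X * X).card := by
  obtain ⟨x, y, z, hxy, hxz, hyz, rfl⟩ := Finset.card_eq_three.1 hX
  have perm1 : ({x, y, z} : Finset Q) = {y, x, z} := by
    ext w; simp only [Finset.mem_insert, Finset.mem_singleton]; tauto
  have perm2 : ({x, y, z} : Finset Q) = {z, x, y} := by
    ext w; simp only [Finset.mem_insert, Finset.mem_singleton]; tauto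
  have perm3 : ({x, y, z} : Finset Q) = {x, z, y} := by
    ext w; simp only [Finset.mem_insert, Finset.mem_singleton]; tauto
  have perm4 : ({x, y, z} : Finset Q) = {y, z, x} := by
    ext w; simp only [Finset.mem_insert, Finset.mem_singleton]; tauto
  by_cases h1 : x ^ 3 = 1 <;> by_cases h2 : y ^ 3 = 1 <;> by_cases h3 : z ^ 3 = 1
  · exfalso
    obtain ⟨v, hv, hv3⟩ := hmix2
    simp only [Finset.mem_insert, Finset.mem_singleton] at hv
    rcases hv with rfl | rfl | rfl <;> contradiction
  · exact five_prod_B h6 x y z hxy hxz hyz h1 h2 h3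
  · rw [perm3]; exact five_prod_B h6 x z y hxz hxy hyz.symm h1 h3 h2
  · exact five_prod_A h6 x y z hxy hxz hyz h1 h2 h3
  · rw [perm4]; exact five_prod_B h6 y z x hyz hxy.symm hxz.symm h2 h3 h1
  · rw [perm1]; exact five_prod_A h6 y x z hxy.symm hyz hxz h2 h1 h3
  · rw [perm2]; exact five_prod_A h6 z x y hxz.symm hyz.symm hxy h3 h1 h2
  · exfalso
    obtain ⟨u, hu, hu3⟩ := hmix1
    simp only [Finset.mem_insert, Finset.mem_singleton] at hu
    rcases hu with rfl | rfl | rfl <;> contradiction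

private lemma rep_bound (X : Finset Q) (γ : Q) :
    X.card + X.card ≤ Fintype.card Q + (X ∩ γ • X⁻¹).card := by
  have h1 : (X ∪ γ • X⁻¹).card + (X ∩ γ • X⁻¹).card = X.card + (γ • X⁻¹).card :=
    Finset.card_union_add_card_inter _ _
  have h2 : (γ • X⁻¹).card = X.card := by
    rw [Finset.card_smul_finset, Finset.card_inv]
  have h3 : (X ∪ γ • X⁻¹).card ≤ Fintype.card Q := by
    rw [← Finset.card_univ]; exact Finset.card_le_card (Finset.subset_univ _)
  omega

private lemma rep_mem {X : Finset Q} {γ x : Q} (hx : x ∈ X ∩ γ • X⁻¹) :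
    x ∈ X ∧ x⁻¹ * γ ∈ X := by
  rw [Finset.mem_inter] at hx
  obtain ⟨hx1, hx2⟩ := hx
  refine ⟨hx1, ?_⟩
  rw [Finset.mem_smul_finset] at hx2
  obtain ⟨w, hw, hEq⟩ := hx2
  rw [Finset.mem_inv] at hw
  obtain ⟨u, hu, rfl⟩ := hw
  have : x⁻¹ * γ = u := by rw [← hEq]; simp [smul_eq_mul]
  rwa [this]
end SIX2


theorem stmt_17 {G : Type*} [CommGroup G] [Fintype G] [DecidableEq G]
    (A : Finset G) (hA : (13 : ℝ) / 32 * Fintype.card G ≤ A.card)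
    (hgen : Subgroup.closure (A : Set G) = ⊤)
    (h2 : ∀ H : Subgroup G, H.index = 2 →
      (∃ a ∈ A, a ∈ H) ∧ (∃ a ∈ A, a ∉ H)) :
    (7 : ℝ) / 10 * Fintype.card G ≤ ((A * A).card : ℝ) := by
  have hn0 : 0 < Fintype.card G := Fintype.card_pos
  have h13 : 13 * Fintype.card G ≤ 32 * A.card := by
    have h32 : (0:ℝ) < 32 := by norm_num
    rw [div_mul_eq_mul_div, div_le_iff₀ h32] at hA
    have : (13 * Fintype.card G : ℝ) ≤ 32 * A.card := by push_cast; linarith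
    exact_mod_cast this
  have hAne : A.Nonempty := by
    rw [← Finset.card_pos]
    by_contra h
    push_neg at h
    omega
  suffices hgoal : 7 * Fintype.card G ≤ 10 * (A * A).card by
    rw [div_mul_eq_mul_div, div_le_iff₀ (by norm_num : (0:ℝ) < 10)]
    have : ((7 * Fintype.card G : ℕ) : ℝ) ≤ ((10 * (A*A).card : ℕ) : ℝ) :=
      Nat.cast_le.2 hgoal
    push_cast at this
    linarith
  obtain ⟨K, C, a₀, ha₀, hCsub, hstab, hAa₀, hcard⟩ := weak_kneser A A hAne hAne
  have hCle : C.card ≤ (A * A).card := Finset.card_le_card hCsub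
  set q := Nat.card K with hqdef
  have hq0 : 0 < q := Nat.card_pos
  have hqn : q * K.index = Fintype.card G := by
    rw [hqdef, ← Nat.card_eq_fintype_card]
    exact Subgroup.card_mul_index K
  by_cases hbig : 9 * q ≤ Fintype.card G
  · omega
  · push_neg at hbig
    have hm1 : 1 ≤ K.index := by
      rcases Nat.eq_zero_or_pos K.index with h | h
      · rw [h, mul_zero] at hqn; omega
      · exact h
    have hm8 : K.index ≤ 8 := by nlinarith [hqn, hbig, hq0]
    -- quotient setup
    letI : Fintype (G ⧸ K) := Fintype.ofFinite _
    letI : DecidableEq (G ⧸ K) := Classical.decEq _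
    letI : DecidablePred (· ∈ K) := fun g => Classical.propDecidable _
    have hcardQ : Fintype.card (G ⧸ K) = K.index := by
      rw [← Nat.card_eq_fintype_card, ← Subgroup.index_eq_card]
    set Abar := A.image (QuotientGroup.mk' K) with hAbar
    set Cbar := C.image (QuotientGroup.mk' K) with hCbar
    have hCq : C.card = Cbar.card * q := card_stable K C hstab
    set u : G ⧸ K → ℕ := fun γ => (A.filter (fun x => QuotientGroup.mk' K x = γ)).card
      with hu
    set mass : G ⧸ K → ℕ :=
      fun γ => ((A*A).filter (fun x => QuotientGroup.mk' K x = γ)).card with hmass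
    have husum : ∑ γ ∈ Abar, u γ = A.card :=
      (Finset.card_eq_sum_card_fiberwise
        (fun x hx => Finset.mem_image_of_mem _ hx)).symm
    have hule : ∀ γ, u γ ≤ q := by
      intro γ
      calc u γ ≤ (Finset.univ.filter (fun x => QuotientGroup.mk' K x = γ)).card :=
            Finset.card_le_card (Finset.filter_subset_filter _ (Finset.subset_univ _))
        _ = q := card_coset_filter K γ
    have hmass_ge : ∀ γ₁ γ₂ : G ⧸ K, γ₁ ∈ Abar → γ₂ ∈ Abar → u γ₁ ≤ mass (γ₁ * γ₂) := by
      intro γ₁ γ₂ h1 h2'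
      rw [hAbar, Finset.mem_image] at h2'
      obtain ⟨g₂, hg₂, hg₂eq⟩ := h2'
      have hne : (A.filter (fun x => QuotientGroup.mk' K x = γ₂)).Nonempty :=
        ⟨g₂, Finset.mem_filter.2 ⟨hg₂, hg₂eq⟩⟩
      calc u γ₁ ≤ ((A.filter (fun x => QuotientGroup.mk' K x = γ₁)) *
            (A.filter (fun x => QuotientGroup.mk' K x = γ₂))).card :=
            Finset.card_le_card_mul_right hne
        _ ≤ mass (γ₁ * γ₂) := by
            apply Finset.card_le_card
            intro z hz
            rw [Finset.mem_mul] at hz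
            obtain ⟨z₁, hz₁, z₂, hz₂, rfl⟩ := hz
            rw [Finset.mem_filter] at hz₁ hz₂
            exact Finset.mem_filter.2 ⟨Finset.mul_mem_mul hz₁.1 hz₂.1,
              by rw [map_mul, hz₁.2, hz₂.2]⟩
    have hcount : ∀ T : Finset (G ⧸ K), Disjoint T Cbar →
        C.card + ∑ γ ∈ T, mass γ ≤ (A*A).card := by
      intro T hT
      have hAAsum : (A*A).card = ∑ γ ∈ Finset.univ, mass γ :=
        Finset.card_eq_sum_card_fiberwise (fun x _ => Finset.mem_univ _)
      have hCsum : C.card = ∑ γ ∈ Cbar,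
          (C.filter (fun x => QuotientGroup.mk' K x = γ)).card :=
        Finset.card_eq_sum_card_fiberwise (fun x hx => Finset.mem_image_of_mem _ hx)
      have hCfib : ∀ γ ∈ Cbar,
          (C.filter (fun x => QuotientGroup.mk' K x = γ)).card ≤ mass γ := by
        intro γ _
        exact Finset.card_le_card (Finset.filter_subset_filter _ hCsub)
      calc C.card + ∑ γ ∈ T, mass γ
          ≤ (∑ γ ∈ Cbar, mass γ) + ∑ γ ∈ T, mass γ := by
            rw [hCsum]
            exact Nat.add_le_add_right (Finset.sum_le_sum hCfib) _
        _ = ∑ γ ∈ Cbar ∪ T, mass γ := by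
            rw [Finset.sum_union hT.symm, Nat.add_comm]
        _ ≤ ∑ γ ∈ Finset.univ, mass γ :=
            Finset.sum_le_sum_of_subset (Finset.subset_univ _)
        _ = (A*A).card := hAAsum.symm
    have hAbarle : Abar.card ≤ Cbar.card := by
      have h1 : (A * {a₀}).image (QuotientGroup.mk' K) ⊆ Cbar :=
        Finset.image_subset_image hAa₀
      have h2' : (A * {a₀}).image (QuotientGroup.mk' K) =
          Abar * {QuotientGroup.mk' K a₀} := by
        rw [Finset.image_mul, Finset.image_singleton]
      have h3 : (Abar * {QuotientGroup.mk' K a₀}).card = Abar.card := by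
        rw [Finset.mul_singleton]
        exact Finset.card_image_of_injective _ (mul_left_injective _)
      calc Abar.card = ((A * {a₀}).image (QuotientGroup.mk' K)).card := by
            rw [h2', h3]
        _ ≤ Cbar.card := Finset.card_le_card h1
    have hAle : A.card ≤ Abar.card * q := by
      rw [← husum]
      calc ∑ γ ∈ Abar, u γ ≤ Abar.card • q := Finset.sum_le_card_nsmul _ _ _
            (fun γ _ => hule γ)
        _ = Abar.card * q := by rw [smul_eq_mul]
    have hfib1 : ∀ x ∈ Abar, A.card ≤ u x + (Abar.card - 1) * q := by
      intro x hx
      have hsub : {x} ⊆ Abar := Finset.singleton_subset_iff.2 hx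
      have hsplit := Finset.sum_sdiff (f := u) hsub
      have hrest : ∑ γ ∈ Abar \ {x}, u γ ≤ (Abar.card - 1) * q := by
        calc ∑ γ ∈ Abar \ {x}, u γ ≤ (Abar \ {x}).card • q :=
              Finset.sum_le_card_nsmul _ _ _ (fun γ _ => hule γ)
          _ = (Abar.card - 1) * q := by
              rw [Finset.card_sdiff_of_subset hsub, Finset.card_singleton, smul_eq_mul]
      have : ∑ γ ∈ {x}, u γ = u x := Finset.sum_singleton _ _
      omega
    have hfib2 : ∀ x ∈ Abar, ∀ y ∈ Abar, x ≠ y →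
        A.card ≤ u x + u y + (Abar.card - 2) * q := by
      intro x hx y hy hxy
      have hsub : ({x, y} : Finset (G ⧸ K)) ⊆ Abar := by
        intro z hz
        simp only [Finset.mem_insert, Finset.mem_singleton] at hz
        rcases hz with rfl | rfl <;> assumption
      have hsplit := Finset.sum_sdiff (f := u) hsub
      have hpair : ∑ γ ∈ ({x, y} : Finset (G ⧸ K)), u γ = u x + u y :=
        Finset.sum_pair hxy
      have hrest : ∑ γ ∈ Abar \ {x, y}, u γ ≤ (Abar.card - 2) * q := by
        calc ∑ γ ∈ Abar \ {x, y}, u γ ≤ (Abar \ {x, y}).card • q :=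
              Finset.sum_le_card_nsmul _ _ _ (fun γ _ => hule γ)
          _ = (Abar.card - 2) * q := by
              rw [Finset.card_sdiff_of_subset hsub, smul_eq_mul,
                Finset.card_insert_of_notMem (by simp [hxy]), Finset.card_singleton]
      omega
    -- threshold helper
    have hthr : ∀ k : ℕ, k * q < C.card → (k+1) * q ≤ C.card := by
      intro k hk
      rw [hCq] at hk ⊢
      have : k < Cbar.card := by
        by_contra hc
        push_neg at hc
        exact absurd hk (by
          have := Nat.mul_le_mul_right q hc
          omega)
      exact Nat.mul_le_mul_right q this
    rcases (show K.index = 1 ∨ K.index = 2 ∨ K.index = 3 ∨ K.index = 4 ∨ K.index = 5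
        ∨ K.index = 6 ∨ K.index = 7 ∨ K.index = 8 by omega) with
      hm | hm | hm | hm | hm | hm | hm | hm
    -- m = 1
    · have h1 : 0 * q < C.card := by
        have : (A * {a₀}).Nonempty := hAne.mul (Finset.singleton_nonempty _)
        have := Finset.card_pos.2 (this.mono hAa₀)
        omega
      have := hthr 0 h1
      rw [hm, mul_one] at hqn
      omega
    -- m = 2
    · rw [hm] at hqn
      by_cases ht2 : 2 ≤ Cbar.card
      · have : 2 * q ≤ C.card := by rw [hCq]; exact Nat.mul_le_mul_right q ht2
        omega
      · push_neg at ht2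
        obtain ⟨hA1, hA2⟩ := h2 K hm
        obtain ⟨a₁, ha₁A, ha₁K⟩ := hA1
        obtain ⟨a₂, ha₂A, ha₂K⟩ := hA2
        have hπa₁ : QuotientGroup.mk' K a₁ ∈ Abar := Finset.mem_image_of_mem _ ha₁A
        have hπa₂ : QuotientGroup.mk' K a₂ ∈ Abar := Finset.mem_image_of_mem _ ha₂A
        have hne12 : QuotientGroup.mk' K a₁ ≠ QuotientGroup.mk' K a₂ := by
          intro h
          have h1 : QuotientGroup.mk' K a₁ = 1 := (QuotientGroup.eq_one_iff a₁).2 ha₁K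
          rw [h] at h1
          exact ha₂K ((QuotientGroup.eq_one_iff a₂).1 h1)
        have hAbar2 : Abar.card = 2 := by
          have hle : Abar.card ≤ 2 := by
            calc Abar.card ≤ Fintype.card (G ⧸ K) := Finset.card_le_univ _
              _ = 2 := by rw [hcardQ, hm]
          have hge : 2 ≤ Abar.card := Finset.one_lt_card.2 ⟨_, hπa₁, _, hπa₂, hne12⟩
          omega
        -- Cbar.card = 1 ; find the missing coset
        have hCbar1 : Cbar.card = 1 := by
          have h1 : 0 * q < C.card := by
            have : (A * {a₀}).Nonempty := hAne.mul (Finset.singleton_nonempty _)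
            have := Finset.card_pos.2 (this.mono hAa₀)
            omega
          have h2' : 1 ≤ Cbar.card := by
            rw [hCq] at h1; by_contra hc; push_neg at hc
            interval_cases h : Cbar.card <;> omega
          omega
        have hmiss : (Finset.univ \ Cbar).card = 1 := by
          rw [Finset.card_sdiff_of_subset (Finset.subset_univ _), Finset.card_univ, hcardQ, hm,
            hCbar1]
        obtain ⟨γ, hγ⟩ := Finset.card_eq_one.1 hmiss
        have hγnot : γ ∉ Cbar := by
          have : γ ∈ Finset.univ \ Cbar := by rw [hγ]; exact Finset.mem_singleton_self γ
          exact (Finset.mem_sdiff.1 this).2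
        -- two representations
        have hrep := rep_bound Abar γ
        rw [hAbar2] at hrep
        have hint : 2 ≤ (Abar ∩ γ • Abar⁻¹).card := by
          rw [hcardQ, hm] at hrep; omega
        obtain ⟨x₁, hx₁, x₂, hx₂, hx12⟩ := Finset.one_lt_card.1 hint
        have hr₁ := rep_mem hx₁
        have hr₂ := rep_mem hx₂
        have hmγ₁ : u x₁ ≤ mass γ := by
          have := hmass_ge x₁ (x₁⁻¹ * γ) hr₁.1 hr₁.2
          rwa [mul_inv_cancel_left] at this
        have hmγ₂ : u x₂ ≤ mass γ := by
          have := hmass_ge x₂ (x₂⁻¹ * γ) hr₂.1 hr₂.2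
          rwa [mul_inv_cancel_left] at this
        have hsumu : A.card ≤ u x₁ + u x₂ + (Abar.card - 2) * q :=
          hfib2 x₁ hr₁.1 x₂ hr₂.1 hx12
        rw [hAbar2] at hsumu
        simp only [Nat.sub_self, Nat.zero_mul, Nat.add_zero] at hsumu
        have hcnt := hcount {γ} (by simp [hγnot])
        rw [Finset.sum_singleton] at hcnt
        have hC1 : C.card = q := by rw [hCq, hCbar1, one_mul]
        omega
    -- m = 3
    · rw [hm] at hqn
      have h1 : 1 * q < C.card := by omega
      have h2' := hthr 1 h1
      by_cases ht3 : 3 ≤ Cbar.card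
      · have : 3 * q ≤ C.card := by rw [hCq]; exact Nat.mul_le_mul_right q ht3
        omega
      · push_neg at ht3
        have hCbar2 : Cbar.card = 2 := by
          rw [hCq] at h1
          have : 1 < Cbar.card := by
            by_contra hc; push_neg at hc
            have := Nat.mul_le_mul_right q hc
            omega
          omega
        have hAbar2 : Abar.card = 2 := by
          have := hAbarle
          have h2q : 2 * q < 32 * A.card := by omega
          have : 2 ≤ Abar.card := by
            by_contra hc; push_neg at hc
            have : Abar.card ≤ 1 := by omega
            have := hAle
            nlinarith
          omega
        have hmiss : (Finset.univ \ Cbar).card = 1 := by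
          rw [Finset.card_sdiff_of_subset (Finset.subset_univ _), Finset.card_univ, hcardQ, hm,
            hCbar2]
        obtain ⟨γ, hγ⟩ := Finset.card_eq_one.1 hmiss
        have hγnot : γ ∉ Cbar := by
          have : γ ∈ Finset.univ \ Cbar := by rw [hγ]; exact Finset.mem_singleton_self γ
          exact (Finset.mem_sdiff.1 this).2
        have hrep := rep_bound Abar γ
        rw [hAbar2, hcardQ, hm] at hrep
        have hint : 1 ≤ (Abar ∩ γ • Abar⁻¹).card := by omega
        obtain ⟨x, hx⟩ := Finset.card_pos.1 hint
        have hr := rep_mem hx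
        have hmγ : u x ≤ mass γ := by
          have := hmass_ge x (x⁻¹ * γ) hr.1 hr.2
          rwa [mul_inv_cancel_left] at this
        have hux : A.card ≤ u x + (Abar.card - 1) * q := hfib1 x hr.1
        rw [hAbar2] at hux
        have hcnt := hcount {γ} (by simp [hγnot])
        rw [Finset.sum_singleton] at hcnt
        have hC2 : C.card = 2 * q := by rw [hCq, hCbar2]
        omega
    -- m = 4
    · rw [hm] at hqn
      have h1 : 2 * q < C.card := by omega
      have := hthr 2 h1
      omega
    -- m = 5
    · rw [hm] at hqn
      have h1 : 3 * q < C.card := by omega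
      have := hthr 3 h1
      omega
    -- m = 6
    · rw [hm] at hqn
      have hcardQ6 : Fintype.card (G ⧸ K) = 6 := by rw [hcardQ, hm]
      have h1 : 3 * q < C.card := by omega
      have h4 := hthr 3 h1
      by_cases ht5 : 5 ≤ Cbar.card
      · have : 5 * q ≤ C.card := by rw [hCq]; exact Nat.mul_le_mul_right q ht5
        omega
      · push_neg at ht5
        have hCbar4 : Cbar.card = 4 := by
          rw [hCq] at h1
          have : 3 < Cbar.card := by
            by_contra hc; push_neg at hc
            have := Nat.mul_le_mul_right q hc
            omega
          omega
        have hAbar34 : 3 ≤ Abar.card ∧ Abar.card ≤ 4 := by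
          constructor
          · by_contra hc; push_neg at hc
            have : Abar.card ≤ 2 := by omega
            have := hAle
            nlinarith
          · calc Abar.card ≤ Cbar.card := hAbarle
              _ = 4 := hCbar4
        by_cases hA4 : Abar.card = 4
        · -- two missing cosets, two reps each
          have hmiss : (Finset.univ \ Cbar).card = 2 := by
            rw [Finset.card_sdiff_of_subset (Finset.subset_univ _), Finset.card_univ, hcardQ6,
              hCbar4]
          obtain ⟨γ₁, γ₂, hγne, hγeq⟩ := Finset.card_eq_two.1 hmiss
          have hγ₁not : γ₁ ∉ Cbar := by
            have : γ₁ ∈ Finset.univ \ Cbar := by rw [hγeq]; simp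
            exact (Finset.mem_sdiff.1 this).2
          have hγ₂not : γ₂ ∉ Cbar := by
            have : γ₂ ∈ Finset.univ \ Cbar := by rw [hγeq]; simp
            exact (Finset.mem_sdiff.1 this).2
          have hmass2 : ∀ γ : G ⧸ K, 2 * mass γ + 2 * q ≥ A.card := by
            intro γ
            have hrep := rep_bound Abar γ
            rw [hA4, hcardQ6] at hrep
            have hint : 2 ≤ (Abar ∩ γ • Abar⁻¹).card := by omega
            obtain ⟨x₁, hx₁, x₂, hx₂, hx12⟩ := Finset.one_lt_card.1 hint
            have hr₁ := rep_mem hx₁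
            have hr₂ := rep_mem hx₂
            have hm₁ : u x₁ ≤ mass γ := by
              have := hmass_ge x₁ (x₁⁻¹ * γ) hr₁.1 hr₁.2
              rwa [mul_inv_cancel_left] at this
            have hm₂ : u x₂ ≤ mass γ := by
              have := hmass_ge x₂ (x₂⁻¹ * γ) hr₂.1 hr₂.2
              rwa [mul_inv_cancel_left] at this
            have hsumu : A.card ≤ u x₁ + u x₂ + (Abar.card - 2) * q :=
              hfib2 x₁ hr₁.1 x₂ hr₂.1 hx12
            rw [hA4] at hsumu
            omega
          have hcnt := hcount {γ₁, γ₂} (by simp [hγ₁not, hγ₂not])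
          rw [Finset.sum_pair hγne] at hcnt
          have hm₁ := hmass2 γ₁
          have hm₂ := hmass2 γ₂
          have hC4 : C.card = 4 * q := by rw [hCq, hCbar4]
          omega
        · -- |Abar| = 3 : use the order-6 argument
          have hA3 : Abar.card = 3 := by omega
          -- index-2 subgroup from the cube kernel
          set Mbar := (powMonoidHom 3 : (G ⧸ K) →* (G ⧸ K)).ker with hMbar
          have hMidx : Mbar.index = 2 := ker_pow3_index hcardQ6
          set M := Mbar.comap (QuotientGroup.mk' K) with hM
          have hMidx2 : M.index = 2 := by
            rw [hM, Subgroup.index_comap_of_surjective _ (QuotientGroup.mk'_surjective K),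
              hMidx]
          obtain ⟨⟨a₁, ha₁A, ha₁M⟩, ⟨a₂, ha₂A, ha₂M⟩⟩ := h2 M hMidx2
          have hmix1 : ∃ w ∈ Abar, w ^ 3 = 1 := by
            refine ⟨QuotientGroup.mk' K a₁, Finset.mem_image_of_mem _ ha₁A, ?_⟩
            have : QuotientGroup.mk' K a₁ ∈ Mbar := ha₁M
            rwa [hMbar, MonoidHom.mem_ker, powMonoidHom_apply] at this
          have hmix2 : ∃ w ∈ Abar, w ^ 3 ≠ 1 := by
            refine ⟨QuotientGroup.mk' K a₂, Finset.mem_image_of_mem _ ha₂A, ?_⟩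
            intro h
            exact ha₂M (by
              rw [hM, Subgroup.mem_comap, hMbar, MonoidHom.mem_ker, powMonoidHom_apply]
              exact h)
          have h5 : 5 ≤ (Abar * Abar).card := five_of_mixed hcardQ6 Abar hA3 hmix1 hmix2
          have hex : ∃ γ ∈ Abar * Abar, γ ∉ Cbar := by
            by_contra hc
            push_neg at hc
            have : Abar * Abar ⊆ Cbar := hc
            have := Finset.card_le_card this
            omega
          obtain ⟨γ, hγmem, hγnot⟩ := hex
          obtain ⟨x, hx, y, hy, rfl⟩ := Finset.mem_mul.1 hγmem
          have hmγ : u x ≤ mass (x * y) := hmass_ge x y hx hy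
          have hux : A.card ≤ u x + (Abar.card - 1) * q := hfib1 x hx
          rw [hA3] at hux
          have hcnt := hcount {x * y} (by simp [hγnot])
          rw [Finset.sum_singleton] at hcnt
          have hC4 : C.card = 4 * q := by rw [hCq, hCbar4]
          omega
    -- m = 7
    · rw [hm] at hqn
      have h1 : 4 * q < C.card := by omega
      have := hthr 4 h1
      omega
    -- m = 8
    · rw [hm] at hqn
      have h1 : 5 * q < C.card := by omega
      have := hthr 5 h1
      omega
end
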